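/- arXiv:2007.09069 — 7 statements merged into one kernel-verified Lean document; each statement's English description precedes it below -/
import Mathlib

section
/- Let X be a finite-dimensional vector space, Z ⊆ X a linear subspace, π:X→Z linear and surjective with dim X = 1 + dim Z, and let K = {x∈X : ⟨f_j, x⟩ ≥ 0 for j=1,…,J} for covectors f_1,…,f_J∈X*. Then there exists a constant C_K > 0 such that for every z∈Z, either π(x) ≠ z for every x∈K, or there exists x∈K with π(x)=z and |x| ≤ C_K|z|_Z. -/
/-!
The fibre of `π` over `z` is the line `σ z + ℝ e`, where `σ` is a continuous linear section of `π`
and `e` spans `ker π`. Along it each constraint reads `0 ≤ a_j + t b_j` with `a_j = f_j (σ z)`,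
`b_j = f_j e`, and `|a_j| ≤ c ‖z‖ |b_j|` whenever `b_j ≠ 0`. Clamping any feasible parameter `t`
to `[-c ‖z‖, c ‖z‖]` keeps it feasible, which gives a lift of norm at most `(‖σ‖ + c ‖e‖) ‖z‖`.
-/

lemma nonneg_add_clamp_mul {a b t c : ℝ} (ht : 0 ≤ a + t * b) (hab : b ≠ 0 → |a| ≤ c * |b|) :
    0 ≤ a + max (-c) (min c t) * b := by
  rcases eq_or_ne b 0 with rfl | hb
  · simpa using ht
  have h := hab hb
  have hc : 0 ≤ c := nonneg_of_mul_nonneg_left ((abs_nonneg a).trans h) (abs_pos.mpr hb)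
  rcases le_total t c with htc | hct
  · rcases le_total (-c) t with hct' | htc'
    · rwa [min_eq_right htc, max_eq_right hct']
    · rw [min_eq_right htc, max_eq_left htc']
      cases abs_cases a <;> cases abs_cases b <;> nlinarith
  · rw [min_eq_left hct, max_eq_right (by linarith)]
    cases abs_cases a <;> cases abs_cases b <;> nlinarith

theorem LinearMap.exists_ker_eq_span_singleton {K V W : Type*} [Field K] [AddCommGroup V]
    [Module K V] [FiniteDimensional K V] [AddCommGroup W] [Module K W] (f : V →ₗ[K] W)
    (hf : Function.Surjective f) (hdim : Module.finrank K V = Module.finrank K W + 1) :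
    ∃ e : V, LinearMap.ker f = K ∙ e := by
  have hker : Module.finrank K (LinearMap.ker f) = 1 := by
    have h := f.finrank_range_add_finrank_ker
    rw [LinearMap.range_eq_top.mpr hf, finrank_top] at h
    omega
  obtain ⟨e, -, he⟩ := finrank_eq_one_iff'.mp hker
  refine ⟨e, le_antisymm (fun x hx => ?_) ((Submodule.span_singleton_le_iff_mem _ _).mpr e.2)⟩
  obtain ⟨t, ht⟩ := he ⟨x, hx⟩
  exact Submodule.mem_span_singleton.mpr ⟨t, congrArg Subtype.val ht⟩

lemma exists_abs_apply_le_mul_norm_mul {ι Z : Type*} [Fintype ι] [NormedAddCommGroup Z]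
    [NormedSpace ℝ Z] (g : ι → StrongDual ℝ Z) (b : ι → ℝ) :
    ∃ c ≥ (0 : ℝ), ∀ j z, b j ≠ 0 → |g j z| ≤ c * ‖z‖ * |b j| := by
  refine ⟨∑ j, ‖g j‖ / |b j|, by positivity, fun j z hb => ?_⟩
  have hj : ‖g j‖ / |b j| ≤ ∑ j, ‖g j‖ / |b j| :=
    Finset.single_le_sum (f := fun j => ‖g j‖ / |b j|) (fun i _ => by positivity)
      (Finset.mem_univ j)
  rw [div_le_iff₀ (abs_pos.mpr hb)] at hj
  calc |g j z| ≤ ‖g j‖ * ‖z‖ := (g j).le_opNorm z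
    _ ≤ (∑ j, ‖g j‖ / |b j|) * |b j| * ‖z‖ := by gcongr
    _ = (∑ j, ‖g j‖ / |b j|) * ‖z‖ * |b j| := by ring

theorem exists_lift_norm_le_of_ker_eq_span_singleton {ι X Z : Type*} [Fintype ι]
    [NormedAddCommGroup X] [NormedSpace ℝ X] [NormedAddCommGroup Z] [NormedSpace ℝ Z]
    (π : X →L[ℝ] Z) (σ : Z →L[ℝ] X) (hσ : ∀ z, π (σ z) = z) (e : X)
    (he : LinearMap.ker (π : X →ₗ[ℝ] Z) = ℝ ∙ e) (f : ι → StrongDual ℝ X) :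
    ∃ C > (0 : ℝ), ∀ x, (∀ j, 0 ≤ f j x) →
      ∃ y, (∀ j, 0 ≤ f j y) ∧ π y = π x ∧ ‖y‖ ≤ C * ‖π x‖ := by
  obtain ⟨c, hc, hab⟩ := exists_abs_apply_le_mul_norm_mul (fun j => (f j).comp σ) (fun j => f j e)
  refine ⟨‖σ‖ + c * ‖e‖ + 1, by positivity, fun x hx => ?_⟩
  set z := π x
  have hπe : π e = 0 := by
    have : e ∈ LinearMap.ker (π : X →ₗ[ℝ] Z) := he ▸ Submodule.mem_span_singleton_self e
    simpa using this
  obtain ⟨t, ht⟩ : ∃ t : ℝ, t • e = x - σ z := by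
    rw [← Submodule.mem_span_singleton, ← he, LinearMap.mem_ker]
    simp [z, hσ]
  set s := max (-(c * ‖z‖)) (min (c * ‖z‖) t)
  have hs : |s| ≤ c * ‖z‖ :=
    abs_le.mpr ⟨le_max_left _ _,
      max_le (by linarith [mul_nonneg hc (norm_nonneg z)]) (min_le_left _ _)⟩
  refine ⟨σ z + s • e, fun j => ?_, by simp [hσ, hπe], ?_⟩
  · have hxj : 0 ≤ f j (σ z) + t * f j e := by
      simpa [← smul_eq_mul, ← map_smul, ← map_add, ht] using hx j
    simpa using nonneg_add_clamp_mul hxj (hab j z)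
  · calc ‖σ z + s • e‖ ≤ ‖σ‖ * ‖z‖ + c * ‖z‖ * ‖e‖ := by
          grw [norm_add_le, norm_smul, Real.norm_eq_abs, hs, σ.le_opNorm]
      _ ≤ (‖σ‖ + c * ‖e‖ + 1) * ‖z‖ := by nlinarith [norm_nonneg z]

theorem stmt5
    {X Z : Type*} [NormedAddCommGroup X] [NormedSpace ℝ X] [FiniteDimensional ℝ X]
    [NormedAddCommGroup Z] [NormedSpace ℝ Z] [FiniteDimensional ℝ Z]
    (π : X →L[ℝ] Z) (hsurj : Function.Surjective π)
    (hdim : Module.finrank ℝ X = Module.finrank ℝ Z + 1)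
    (J : ℕ) (fK : Fin J → StrongDual ℝ X)
    (K : Set X) (hK : K = {x : X | ∀ j : Fin J, 0 ≤ fK j x}) :
    ∃ C > (0:ℝ), ∀ z : Z,
      (∀ x ∈ K, π x ≠ z) ∨ ∃ x ∈ K, π x = z ∧ ‖x‖ ≤ C * ‖z‖ := by
  subst hK
  obtain ⟨σ, hσ⟩ := π.exists_rightInverse_of_surjective (LinearMap.range_eq_top.mpr hsurj)
  obtain ⟨e, he⟩ := (π : X →ₗ[ℝ] Z).exists_ker_eq_span_singleton hsurj hdim
  obtain ⟨C, hC, hlift⟩ := exists_lift_norm_le_of_ker_eq_span_singleton π σ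
    (fun z => congr($hσ z)) e he fK
  refine ⟨C, hC, fun z => ?_⟩
  by_cases h : ∃ x ∈ {x | ∀ j, 0 ≤ fK j x}, π x = z
  · obtain ⟨x, hx, rfl⟩ := h
    exact Or.inr (hlift x hx)
  · push Not at h
    exact Or.inl h
end

section
/- Let (V,‖·‖) be a normed space and f:[a,b]→V a bounded measurable function such that ‖f(t)−f(s)‖² ≤ ∫ₛᵗ ‖f(t)−f(τ)‖ g(τ)dτ + ‖f(t)−f(s)‖ ∫ₛᵗ h(τ)dτ for every a≤s≤t≤b, where g,h∈L¹(a,b) are nonnegative. Then ‖f(t)−f(s)‖ ≤ ∫ₛᵗ (g(τ)+h(τ))dτ for every a≤s≤t≤b. -/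
/-!
Fix `t` and let `B` be the supremum of `φ σ = ‖f t - f σ‖` over `σ ∈ [s, t]`. Bounding `φ` by `B`
under the integral and enlarging `[σ, t]` to `[s, t]` turns the hypothesis into
`φ σ ^ 2 ≤ B * (G + H)`, where `G` and `H` are the integrals of `g` and `h` over `[s, t]`.
Taking the supremum gives `B ^ 2 ≤ B * (G + H)`, hence `φ s ≤ B ≤ G + H`.
-/

open MeasureTheory Set

theorem le_of_isLUB_of_forall_sq_le_mul {S : Set ℝ} {B c : ℝ} (hS : IsLUB S B) (hB : 0 ≤ B)
    (hc : 0 ≤ c) (h : ∀ x ∈ S, x ^ 2 ≤ B * c) : B ≤ c := by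
  have hB_le : B ≤ √(B * c) :=
    hS.2 fun x hx => (le_abs_self x).trans (Real.abs_le_sqrt (h x hx))
  have hB_sq : B ^ 2 ≤ B * c := (Real.le_sqrt hB (by positivity)).1 hB_le
  nlinarith

namespace intervalIntegral

variable {μ : Measure ℝ} {a b : ℝ}

theorem integral_mono_interval_left_of_nonneg {f : ℝ → ℝ} {c : ℝ} (hac : a ≤ c) (hcb : c ≤ b)
    (hf : IntervalIntegrable f μ a b) (hf0 : ∀ τ ∈ Icc a b, 0 ≤ f τ) :
    ∫ τ in c..b, f τ ∂μ ≤ ∫ τ in a..b, f τ ∂μ :=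
  integral_mono_interval hac hcb le_rfl
    ((ae_restrict_iff' measurableSet_Ioc).2 (ae_of_all _ fun τ hτ => hf0 τ (Ioc_subset_Icc_self hτ)))
    hf

theorem integral_mul_le_const_mul_integral {φ g : ℝ → ℝ} {B : ℝ} (hab : a ≤ b)
    (hg : IntervalIntegrable g μ a b) (hg0 : ∀ τ ∈ Icc a b, 0 ≤ g τ)
    (hφ0 : ∀ τ ∈ Icc a b, 0 ≤ φ τ) (hφB : ∀ τ ∈ Icc a b, φ τ ≤ B) :
    ∫ τ in a..b, φ τ * g τ ∂μ ≤ B * ∫ τ in a..b, g τ ∂μ := by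
  rw [← integral_const_mul, integral_of_le hab, integral_of_le hab]
  refine integral_mono_of_nonneg ?_ (hg.1.const_mul B) ?_ <;>
    filter_upwards [ae_restrict_mem measurableSet_Ioc] with τ hτ <;>
    have hτ' := Ioc_subset_Icc_self hτ
  · exact mul_nonneg (hφ0 τ hτ') (hg0 τ hτ')
  · exact mul_le_mul_of_nonneg_right (hφB τ hτ') (hg0 τ hτ')

end intervalIntegral

theorem le_integral_add_of_sq_le_integral {φ g h : ℝ → ℝ} {s t : ℝ} (hst : s ≤ t)
    (hφ0 : ∀ σ ∈ Icc s t, 0 ≤ φ σ) (hφ : BddAbove (φ '' Icc s t))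
    (hg : IntervalIntegrable g volume s t) (hh : IntervalIntegrable h volume s t)
    (hg0 : ∀ τ ∈ Icc s t, 0 ≤ g τ) (hh0 : ∀ τ ∈ Icc s t, 0 ≤ h τ)
    (hineq : ∀ σ ∈ Icc s t,
      φ σ ^ 2 ≤ (∫ τ in σ..t, φ τ * g τ) + φ σ * ∫ τ in σ..t, h τ) :
    ∀ σ ∈ Icc s t, φ σ ≤ ∫ τ in s..t, (g τ + h τ) := by
  set B := sSup (φ '' Icc s t)
  have hB : IsLUB (φ '' Icc s t) B := isLUB_csSup ((nonempty_Icc.2 hst).image φ) hφ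
  have hφB : ∀ σ ∈ Icc s t, φ σ ≤ B := fun σ hσ => hB.1 (mem_image_of_mem φ hσ)
  have hB0 : 0 ≤ B := (hφ0 s (left_mem_Icc.2 hst)).trans (hφB s (left_mem_Icc.2 hst))
  set G := ∫ τ in s..t, g τ
  set H := ∫ τ in s..t, h τ
  have hsq : ∀ x ∈ φ '' Icc s t, x ^ 2 ≤ B * (G + H) := by
    rintro _ ⟨σ, hσ, rfl⟩
    have hsub : Icc σ t ⊆ Icc s t := Icc_subset_Icc_left hσ.1
    have hgσ : IntervalIntegrable g volume σ t := hg.mono_set (by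
      rw [uIcc_of_le hσ.2, uIcc_of_le hst]; exact hsub)
    have hφg : ∫ τ in σ..t, φ τ * g τ ≤ B * ∫ τ in σ..t, g τ :=
      intervalIntegral.integral_mul_le_const_mul_integral hσ.2 hgσ (fun τ hτ => hg0 τ (hsub hτ))
        (fun τ hτ => hφ0 τ (hsub hτ)) (fun τ hτ => hφB τ (hsub hτ))
    have hGσ : ∫ τ in σ..t, g τ ≤ G :=
      intervalIntegral.integral_mono_interval_left_of_nonneg hσ.1 hσ.2 hg hg0
    have hHσ : ∫ τ in σ..t, h τ ≤ H :=
      intervalIntegral.integral_mono_interval_left_of_nonneg hσ.1 hσ.2 hh hh0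
    calc φ σ ^ 2 ≤ (∫ τ in σ..t, φ τ * g τ) + φ σ * ∫ τ in σ..t, h τ := hineq σ hσ
      _ ≤ B * G + B * H := add_le_add (hφg.trans (mul_le_mul_of_nonneg_left hGσ hB0))
          (mul_le_mul (hφB σ hσ) hHσ
            (intervalIntegral.integral_nonneg hσ.2 fun τ hτ => hh0 τ (hsub hτ)) hB0)
      _ = B * (G + H) := by ring
  have hGH : 0 ≤ G + H := add_nonneg (intervalIntegral.integral_nonneg hst hg0)
    (intervalIntegral.integral_nonneg hst hh0)
  intro σ hσ
  rw [intervalIntegral.integral_add hg hh]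
  exact (hφB σ hσ).trans (le_of_isLUB_of_forall_sq_le_mul hB hB0 hGH hsq)

theorem stmt6_general
    {V : Type*} [NormedAddCommGroup V]
    (a b : ℝ)
    (f : ℝ → V)
    (hfbdd : ∃ M : ℝ, ∀ t ∈ Icc a b, ‖f t‖ ≤ M)
    (g h : ℝ → ℝ)
    (hg : IntervalIntegrable g volume a b) (hh : IntervalIntegrable h volume a b)
    (hgnonneg : ∀ τ ∈ Icc a b, 0 ≤ g τ) (hhnonneg : ∀ τ ∈ Icc a b, 0 ≤ h τ)
    (hineq : ∀ s t : ℝ, a ≤ s → s ≤ t → t ≤ b →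
      ‖f t - f s‖ ^ 2 ≤ (∫ τ in s..t, ‖f t - f τ‖ * g τ)
        + ‖f t - f s‖ * ∫ τ in s..t, h τ) :
    ∀ s t : ℝ, a ≤ s → s ≤ t → t ≤ b →
      ‖f t - f s‖ ≤ ∫ τ in s..t, (g τ + h τ) := by
  intro s t hs hst htb
  obtain ⟨M, hM⟩ := hfbdd
  have hsub : Icc s t ⊆ Icc a b := Icc_subset_Icc hs htb
  have hsub' : uIcc s t ⊆ uIcc a b := uIcc_subset_uIcc
    (Icc_subset_uIcc (hsub (left_mem_Icc.2 hst))) (Icc_subset_uIcc (hsub (right_mem_Icc.2 hst)))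
  have hbdd : BddAbove ((fun σ => ‖f t - f σ‖) '' Icc s t) := by
    refine ⟨M + M, ?_⟩
    rintro _ ⟨σ, hσ, rfl⟩
    exact (norm_sub_le _ _).trans
      (add_le_add (hM t (hsub (right_mem_Icc.2 hst))) (hM σ (hsub hσ)))
  exact le_integral_add_of_sq_le_integral hst (fun _ _ => norm_nonneg _) hbdd
    (hg.mono_set hsub') (hh.mono_set hsub') (fun τ hτ => hgnonneg τ (hsub hτ))
    (fun τ hτ => hhnonneg τ (hsub hτ)) (fun σ hσ => hineq σ t (hs.trans hσ.1) hσ.2 htb)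
    s (left_mem_Icc.2 hst)

theorem stmt6
    {V : Type*} [NormedAddCommGroup V] [NormedSpace ℝ V]
    [MeasurableSpace V] [BorelSpace V]
    (a b : ℝ) (hab : a ≤ b)
    (f : ℝ → V) (hfmeas : Measurable f)
    (hfbdd : ∃ M : ℝ, ∀ t ∈ Icc a b, ‖f t‖ ≤ M)
    (g h : ℝ → ℝ)
    (hg : IntervalIntegrable g volume a b) (hh : IntervalIntegrable h volume a b)
    (hgnonneg : ∀ τ ∈ Icc a b, 0 ≤ g τ) (hhnonneg : ∀ τ ∈ Icc a b, 0 ≤ h τ)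
    (hineq : ∀ s t : ℝ, a ≤ s → s ≤ t → t ≤ b →
      ‖f t - f s‖ ^ 2 ≤ (∫ τ in s..t, ‖f t - f τ‖ * g τ)
        + ‖f t - f s‖ * ∫ τ in s..t, h τ) :
    ∀ s t : ℝ, a ≤ s → s ≤ t → t ≤ b →
      ‖f t - f s‖ ≤ ∫ τ in s..t, (g τ + h τ) :=
  stmt6_general a b f hfbdd g h hg hh hgnonneg hhnonneg hineq
end

section
/- Let X be a reflexive Banach space and R:[a,b]×X→[0,∞] a ψ-regular functional. For f:[a,b]→X, define the R-variation V_R(f;s,t) := lim_{n→∞} Σ_{k=1}^n R(t_{k−1}, f(t_k)−f(t_{k−1})) over fine sequences of partitions s=t_0<…<t_n=t with mesh tending to 0. If f is R-absolutely continuous (i.e., absolutely continuous with ∫ₐᵇ R(τ,ḟ(τ))dτ<∞), then V_R(f;s,t) = ∫ₛᵗ R(τ, ḟ(τ))dτ for every a≤s≤t≤b. -/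
/-!
Write `t_k` for the points of a partition and `w_k` for the mean of `f'` over `(t_k, t_{k+1}]`;
by homogeneity the partition sum is `∑ (t_{k+1} - t_k) R(t_k, w_k)`. Since `αl ψ ≤ R`, the time
regularity of `R` becomes the relative bound `R(v, x) ≤ (1 + σ(v - u)/αl) R(u, x)`.

Upper bound: Jensen's inequality for the sublinear lower semicontinuous functional `R(t_k, ·)`
(obtained by separating a point from its epigraph, a closed convex cone) gives
`R(t_k, f(t_{k+1}) - f(t_k)) ≤ ∫ R(t_k, f')` over the cell, and the relative bound replaces `t_k`
by `τ` at the cost of a factor `1 + o(1)`.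

Lower bound: the partition sum is the integral of the step function equal to `R(t_k, w_k)` on the
`k`-th cell. By the Lebesgue differentiation theorem, `w_k → f'(τ)` along the cells containing `τ`
for almost every `τ`, so lower semicontinuity of `R(τ, ·)` and the relative bound put `R(τ, f'(τ))`
below the liminf of the step functions, and Fatou's lemma concludes.
-/

open MeasureTheory Set Filter ENNReal

/-- A fine sequence of partitions of `[s,t]`: for each `j`, `P j 0 = s < P j 1 < … < P j (n j) = t`,
and the mesh tends to `0` as `j → ∞`. -/
def IsFineSeq (s t : ℝ) (n : ℕ → ℕ) (P : ℕ → ℕ → ℝ) : Prop :=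
  (∀ j, P j 0 = s) ∧ (∀ j, P j (n j) = t) ∧
    (∀ j, ∀ k, k < n j → P j k < P j (k + 1)) ∧
    ∀ ε > (0:ℝ), ∃ N : ℕ, ∀ j ≥ N, ∀ k < n j, P j (k + 1) - P j k < ε

/-- The Riemann-type sum `Σ_{k=1}^{n} R(t_{k-1}, f(t_k) - f(t_{k-1}))` over a partition. -/
noncomputable def partSum {X : Type*} [NormedAddCommGroup X]
    (R : ℝ → X → ℝ≥0∞) (f : ℝ → X) (n : ℕ) (P : ℕ → ℝ) : ℝ≥0∞ :=
  ∑ k ∈ Finset.range n, R (P k) (f (P (k + 1)) - f (P k))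

/-- `V` is the `R`-variation of `f` on `[s,t]`: along every fine sequence of partitions the
partition sums converge to `V`. -/
def RVarEq {X : Type*} [NormedAddCommGroup X]
    (R : ℝ → X → ℝ≥0∞) (f : ℝ → X) (s t : ℝ) (V : ℝ≥0∞) : Prop :=
  ∀ (n : ℕ → ℕ) (P : ℕ → ℕ → ℝ), IsFineSeq s t n P →
    Tendsto (fun j => partSum R f (n j) (P j)) atTop (nhds V)

/-- `f` is absolutely continuous on `[a,b]` with derivative (density) `f'`. -/
def HasACDeriv {X : Type*} [NormedAddCommGroup X] [NormedSpace ℝ X] [CompleteSpace X]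
    (a b : ℝ) (f f' : ℝ → X) : Prop :=
  IntervalIntegrable f' MeasureTheory.volume a b ∧
    ∀ t ∈ Set.Icc a b, f t = f a + ∫ τ in a..t, f' τ

open Topology
open scoped NNReal

section Jensen

variable {X : Type*} [NormedAddCommGroup X] [NormedSpace ℝ X]

structure IsLscSublinear (F : X → ℝ≥0∞) : Prop where
  map_zero : F 0 = 0
  convex : ∀ u v : X, ∀ θ : ℝ, θ ∈ Icc (0:ℝ) 1 →
    F (θ • u + (1 - θ) • v) ≤ ENNReal.ofReal θ * F u + ENNReal.ofReal (1 - θ) * F v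
  smul : ∀ l : ℝ, 0 < l → ∀ v : X, F (l • v) = ENNReal.ofReal l * F v
  lsc : LowerSemicontinuous F

theorem exists_dual_nonpos_of_notMem_cone {E : Type*} [NormedAddCommGroup E] [NormedSpace ℝ E]
    {K : Set E} (hconv : Convex ℝ K) (hclosed : IsClosed K) (hzero : (0 : E) ∈ K)
    (hsmul : ∀ p ∈ K, ∀ l : ℝ, 0 < l → l • p ∈ K) {x : E} (hx : x ∉ K) :
    ∃ φ : StrongDual ℝ E, (∀ p ∈ K, φ p ≤ 0) ∧ 0 < φ x := by
  obtain ⟨φ, u, hφK, hux⟩ := geometric_hahn_banach_closed_point hconv hclosed hx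
  have hu : 0 < u := by simpa using hφK 0 hzero
  refine ⟨φ, fun p hp => not_lt.mp fun hpos => ?_, hu.trans hux⟩
  have := hφK _ (hsmul p hp (u / φ p) (div_pos hu hpos))
  rw [φ.map_smul, smul_eq_mul, div_mul_cancel₀ _ hpos.ne'] at this
  exact lt_irrefl _ this

namespace IsLscSublinear

variable {F : X → ℝ≥0∞}

-- `0 ≤ p.2` matters: `ENNReal.ofReal` sends negative heights to `0`.
def epigraph (F : X → ℝ≥0∞) : Set (X × ℝ) := {p | 0 ≤ p.2 ∧ F p.1 ≤ ENNReal.ofReal p.2}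

theorem convex_epigraph (hF : IsLscSublinear F) : Convex ℝ (epigraph F) := by
  rintro ⟨x, r⟩ ⟨hr, hxr⟩ ⟨y, q⟩ ⟨hq, hyq⟩ θ₁ θ₂ hθ₁ hθ₂ hsum
  obtain rfl : θ₂ = 1 - θ₁ := by linarith
  refine ⟨show 0 ≤ θ₁ * r + (1 - θ₁) * q by positivity, ?_⟩
  calc F (θ₁ • x + (1 - θ₁) • y)
      ≤ ENNReal.ofReal θ₁ * F x + ENNReal.ofReal (1 - θ₁) * F y :=
        hF.convex _ _ _ ⟨hθ₁, by linarith⟩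
    _ ≤ ENNReal.ofReal θ₁ * ENNReal.ofReal r + ENNReal.ofReal (1 - θ₁) * ENNReal.ofReal q := by
        gcongr
    _ = ENNReal.ofReal (θ₁ * r + (1 - θ₁) * q) := by
        rw [← ENNReal.ofReal_mul hθ₁, ← ENNReal.ofReal_mul hθ₂,
          ← ENNReal.ofReal_add (by positivity) (by positivity)]

theorem isClosed_epigraph (hF : IsLscSublinear F) : IsClosed (epigraph F) :=
  (isClosed_le continuous_const continuous_snd).inter <|
    hF.lsc.isClosed_epigraph.preimage <|
      continuous_fst.prodMk (ENNReal.continuous_ofReal.comp continuous_snd)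

theorem smul_mem_epigraph (hF : IsLscSublinear F) {p : X × ℝ} (hp : p ∈ epigraph F) {l : ℝ}
    (hl : 0 < l) : l • p ∈ epigraph F :=
  ⟨mul_nonneg hl.le hp.1, by
    simpa [hF.smul l hl, ENNReal.ofReal_mul hl.le] using mul_le_mul_right hp.2 (ENNReal.ofReal l)⟩

/-- Jensen's inequality; homogeneity of `F` makes normalising `μ` unnecessary. -/
theorem map_integral_le [CompleteSpace X] (hF : IsLscSublinear F) {α : Type*} [MeasurableSpace α]
    {μ : Measure α} [IsFiniteMeasure μ] {h : α → X} (hh : Integrable h μ) :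
    F (∫ x, h x ∂μ) ≤ ∫⁻ x, F (h x) ∂μ := by
  borelize X
  by_contra! hlt
  set I := ∫⁻ x, F (h x) ∂μ
  have hI : I ≠ ⊤ := hlt.ne_top
  have hFh : AEMeasurable (fun x => F (h x)) μ :=
    hF.lsc.measurable.comp_aemeasurable hh.aemeasurable
  have hg : Integrable (fun x => (F (h x)).toReal) μ := integrable_toReal_of_lintegral_ne_top hFh hI
  have hnot : (∫ x, h x ∂μ, I.toReal) ∉ epigraph F := fun hmem =>
    (ENNReal.ofReal_toReal hI ▸ hmem.2).not_gt hlt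
  obtain ⟨φ, hφ, hφpos⟩ := exists_dual_nonpos_of_notMem_cone hF.convex_epigraph hF.isClosed_epigraph
    ⟨le_rfl, by simp [hF.map_zero]⟩ (fun p hp l hl => hF.smul_mem_epigraph hp hl) hnot
  have hmem : ∀ᵐ x ∂μ, (h x, (F (h x)).toReal) ∈ epigraph F := by
    filter_upwards [ae_lt_top' hFh hI] with x hx
    exact ⟨ENNReal.toReal_nonneg, (ENNReal.ofReal_toReal hx.ne).ge⟩
  have : φ (∫ x, h x ∂μ, I.toReal) ≤ 0 := by
    rw [← integral_toReal hFh (ae_lt_top' hFh hI), ← integral_pair hh hg,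
      ← φ.integral_comp_comm (hh.prodMk hg)]
    exact integral_nonpos_of_ae (hmem.mono fun x hx => hφ _ hx)
  exact this.not_gt hφpos

end IsLscSublinear

end Jensen

namespace ENNReal

theorem liminf_mul_le_of_tendsto_one {ι : Type*} {l : Filter ι} {c x : ι → ℝ≥0∞}
    (hc : Tendsto c l (𝓝 1)) : liminf (fun i => c i * x i) l ≤ liminf x l := by
  rw [le_liminf_iff]
  intro y hy
  obtain ⟨y', hyy', hy'⟩ := exists_between hy
  have hcy : Tendsto (fun i => c i * y) l (𝓝 y) := by
    simpa using ENNReal.Tendsto.mul_const hc (Or.inr hy.ne_top)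
  filter_upwards [eventually_lt_of_lt_liminf hy', hcy.eventually (gt_mem_nhds hyy')]
    with i hlt hlt'
  exact lt_of_mul_lt_mul_left' (hlt'.trans hlt)

theorem le_of_forall_pos_le_one_add_mul {x y : ℝ≥0∞}
    (h : ∀ ε : ℝ≥0, 0 < ε → x ≤ (1 + ε) * y) : x ≤ y := by
  have hlim : Tendsto (fun ε : ℝ≥0 => (1 + (ε : ℝ≥0∞)) * y) (𝓝[>] 0) (𝓝 y) := by
    have : Tendsto (fun ε : ℝ≥0 => 1 + (ε : ℝ≥0∞)) (𝓝[>] 0) (𝓝 1) := by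
      simpa using (ENNReal.continuous_coe.tendsto 0).mono_left nhdsWithin_le_nhds
        |>.const_add 1
    simpa using ENNReal.Tendsto.mul_const this (Or.inl one_ne_zero)
  exact ge_of_tendsto hlim (eventually_nhdsWithin_of_forall h)

/-- An additive error controlled by `p` becomes a relative one once `y` dominates `α p`. -/
theorem le_one_add_mul_of_le_add {x y p : ℝ≥0∞} {α e : ℝ} (hα : 0 < α)
    (hp : ENNReal.ofReal α * p ≤ y) (h : p ≠ ⊤ → x ≤ y + p * ENNReal.ofReal e) :
    x ≤ (1 + ENNReal.ofReal (e / α)) * y := by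
  have hα' : ENNReal.ofReal α ≠ 0 := (ENNReal.ofReal_pos.mpr hα).ne'
  by_cases hpt : p = ⊤
  · rw [hpt, ENNReal.mul_top hα', top_le_iff] at hp
    rw [hp, ENNReal.mul_top (by simp)]
    exact le_top
  have hpy : p ≤ y / ENNReal.ofReal α :=
    (ENNReal.le_div_iff_mul_le (.inl hα') (.inl ENNReal.ofReal_ne_top)).mpr (by rwa [mul_comm])
  calc x ≤ y + p * ENNReal.ofReal e := h hpt
    _ ≤ y + y / ENNReal.ofReal α * ENNReal.ofReal e := by gcongr
    _ = (1 + ENNReal.ofReal (e / α)) * y := by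
      rw [ENNReal.ofReal_div_of_pos hα, add_mul, one_mul, ENNReal.div_eq_inv_mul,
        ENNReal.div_eq_inv_mul]
      ring

end ENNReal

theorem smul_setAverage_Ioc {E : Type*} [NormedAddCommGroup E] [NormedSpace ℝ E] (g : ℝ → E)
    {u v : ℝ} (huv : u < v) : (v - u) • ⨍ x in Ioc u v, g x = ∫ x in Ioc u v, g x := by
  rw [setAverage_eq, measureReal_def, Real.volume_Ioc,
    ENNReal.toReal_ofReal (sub_nonneg.mpr huv.le),
    smul_inv_smul₀ (sub_ne_zero.mpr huv.ne')]

theorem ae_tendsto_setAverage_Ioc {E : Type*} [NormedAddCommGroup E] [NormedSpace ℝ E]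
    [CompleteSpace E] {g : ℝ → E} {S : Set ℝ} (hS : MeasurableSet S) (hg : IntegrableOn g S) :
    ∀ᵐ τ ∂volume.restrict S, ∀ u v : ℕ → ℝ, (∀ j, τ ∈ Ioc (u j) (v j)) →
      (∀ j, Ioc (u j) (v j) ⊆ S) → Tendsto (fun j => v j - u j) atTop (𝓝 0) →
        Tendsto (fun j => ⨍ x in Ioc (u j) (v j), g x) atTop (𝓝 (g τ)) := by
  have hloc : LocallyIntegrable (S.indicator g) volume :=
    (hg.integrable_indicator hS).locallyIntegrable
  filter_upwards [ae_restrict_of_ae (IsUnifLocDoublingMeasure.ae_tendsto_average volume hloc 1),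
    ae_restrict_mem hS] with τ hτ hτS u v hmem hsub hlen
  have hpos : ∀ j, 0 < (v j - u j) / 2 := fun j => by linarith [(hmem j).1, (hmem j).2]
  have hball : ∀ j, Metric.closedBall ((u j + v j) / 2) ((v j - u j) / 2) = Icc (u j) (v j) :=
    fun j => by rw [Real.closedBall_eq_Icc]; congr 1 <;> ring
  have hrad : Tendsto (fun j => (v j - u j) / 2) atTop (𝓝[>] 0) :=
    tendsto_nhdsWithin_iff.mpr ⟨by simpa using hlen.div_const 2, .of_forall hpos⟩
  have := hτ (fun j => (u j + v j) / 2) _ hrad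
    (.of_forall fun j => by rw [one_mul, hball]; exact Ioc_subset_Icc_self (hmem j))
  rw [indicator_of_mem hτS] at this
  refine this.congr fun j => ?_
  rw [hball, setAverage_congr Ioc_ae_eq_Icc.symm]
  exact setAverage_congr_fun measurableSet_Ioc
    (.of_forall fun x hx => indicator_of_mem (hsub j hx) g)

def IsPartition (s t : ℝ) (m : ℕ) (P : ℕ → ℝ) : Prop :=
  P 0 = s ∧ P m = t ∧ ∀ k < m, P k < P (k + 1)

namespace IsPartition

variable {s t : ℝ} {m k : ℕ} {P : ℕ → ℝ}

theorem monotoneOn (hP : IsPartition s t m P) : MonotoneOn P (Iic m) :=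
  monotoneOn_of_le_succ ordConnected_Iic fun k _ _ hk =>
    (hP.2.2 k (Order.succ_le_iff.mp hk)).le

theorem mem_Icc (hP : IsPartition s t m P) (hk : k ≤ m) : P k ∈ Icc s t := by
  rw [← hP.1, ← hP.2.1]
  exact ⟨hP.monotoneOn (Nat.zero_le m) hk (Nat.zero_le k), hP.monotoneOn hk (mem_Iic.mpr le_rfl) hk⟩

theorem Ioc_subset (hP : IsPartition s t m P) (hk : k < m) :
    Ioc (P k) (P (k + 1)) ⊆ Ioc s t :=
  Ioc_subset_Ioc (hP.mem_Icc hk.le).1 (hP.mem_Icc hk).2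

theorem exists_mem_Ioc (hP : IsPartition s t m P) {τ : ℝ} (hτ : τ ∈ Ioc s t) :
    ∃ k < m, τ ∈ Ioc (P k) (P (k + 1)) := by
  obtain ⟨rfl, rfl, hlt⟩ := hP
  induction m with
  | zero => exact absurd hτ (by simp)
  | succ m ih =>
    by_cases hτm : τ ≤ P m
    · obtain ⟨k, hk, hτk⟩ := ih (fun k hk => hlt k (by omega)) ⟨hτ.1, hτm⟩
      exact ⟨k, by omega, hτk⟩
    · exact ⟨m, by omega, not_le.mp hτm, hτ.2⟩

theorem sum_lintegral_Ioc (hP : IsPartition s t m P) (g : ℝ → ℝ≥0∞) :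
    ∑ k ∈ Finset.range m, ∫⁻ τ in Ioc (P k) (P (k + 1)), g τ = ∫⁻ τ in Ioc s t, g τ := by
  obtain ⟨rfl, rfl, hlt⟩ := hP
  induction m with
  | zero => simp
  | succ m ih =>
    have hP' : IsPartition (P 0) (P m) m P := ⟨rfl, rfl, fun k hk => hlt k (by omega)⟩
    rw [Finset.sum_range_succ, ih hP'.2.2, ← Ioc_union_Ioc_eq_Ioc (hP'.mem_Icc le_rfl).1
      (hlt m m.lt_succ_self).le, lintegral_union measurableSet_Ioc (Ioc_disjoint_Ioc_of_le le_rfl)]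

end IsPartition

namespace IsFineSeq

variable {s t : ℝ} {n : ℕ → ℕ} {P : ℕ → ℕ → ℝ}

theorem isPartition (hP : IsFineSeq s t n P) (j : ℕ) : IsPartition s t (n j) (P j) :=
  ⟨hP.1 j, hP.2.1 j, hP.2.2.1 j⟩

theorem eventually_forall_sub_lt (hP : IsFineSeq s t n P) {δ : ℝ} (hδ : 0 < δ) :
    ∀ᶠ j in atTop, ∀ k < n j, P j (k + 1) - P j k < δ :=
  eventually_atTop.mpr (hP.2.2.2 δ hδ)

theorem tendsto_sub {κ : ℕ → ℕ} (hP : IsFineSeq s t n P) (hκ : ∀ j, κ j < n j) :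
    Tendsto (fun j => P j (κ j + 1) - P j (κ j)) atTop (𝓝 0) :=
  tendsto_order.mpr ⟨fun _ hδ => .of_forall fun j => hδ.trans (sub_pos.mpr (hP.2.2.1 j _ (hκ j))),
    fun _ hδ => (hP.eventually_forall_sub_lt hδ).mono fun j hj => hj _ (hκ j)⟩

end IsFineSeq

section RVariation

variable {X : Type*} [NormedAddCommGroup X] [NormedSpace ℝ X]
  {R : ℝ → X → ℝ≥0∞} {ρ : ℝ → ℝ≥0∞} {f f' : ℝ → X} {s t : ℝ}

noncomputable def partStep (R : ℝ → X → ℝ≥0∞) (g : ℝ → X) (m : ℕ) (P : ℕ → ℝ) : ℝ → ℝ≥0∞ :=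
  ∑ k ∈ Finset.range m,
    (Ioc (P k) (P (k + 1))).indicator fun _ => R (P k) (⨍ x in Ioc (P k) (P (k + 1)), g x)

section Partition

variable {m : ℕ} {P : ℕ → ℝ}

theorem measurable_partStep (g : ℝ → X) : Measurable (partStep R g m P) := by
  rw [partStep, Finset.sum_fn]
  exact Finset.measurable_sum _ fun _ _ => measurable_const.indicator measurableSet_Ioc

theorem le_partStep (g : ℝ → X) {k : ℕ} (hk : k < m) {τ : ℝ} (hτ : τ ∈ Ioc (P k) (P (k + 1))) :
    R (P k) (⨍ x in Ioc (P k) (P (k + 1)), g x) ≤ partStep R g m P τ := by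
  rw [partStep, Finset.sum_apply]
  refine le_trans ?_ (Finset.single_le_sum (fun _ _ => bot_le) (Finset.mem_range.mpr hk))
  rw [indicator_of_mem hτ]

theorem partSum_eq_sum_setIntegral (hP : IsPartition s t m P)
    (hf : ∀ u v, s ≤ u → u ≤ v → v ≤ t → f v - f u = ∫ x in Ioc u v, f' x) :
    partSum R f m P = ∑ k ∈ Finset.range m, R (P k) (∫ x in Ioc (P k) (P (k + 1)), f' x) :=
  Finset.sum_congr rfl fun k hk => by
    have hk := Finset.mem_range.mp hk
    rw [hf _ _ (hP.mem_Icc hk.le).1 (hP.2.2 k hk).le (hP.mem_Icc hk).2]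

theorem lintegral_partStep (hP : IsPartition s t m P)
    (hRhom : ∀ u ∈ Icc s t, ∀ l : ℝ, 0 < l → ∀ v : X, R u (l • v) = ENNReal.ofReal l * R u v)
    (hf : ∀ u v, s ≤ u → u ≤ v → v ≤ t → f v - f u = ∫ x in Ioc u v, f' x) :
    ∫⁻ τ, partStep R f' m P τ = partSum R f m P := by
  simp only [partStep, Finset.sum_apply]
  rw [lintegral_finsetSum _ fun _ _ => measurable_const.indicator measurableSet_Ioc,
    partSum_eq_sum_setIntegral hP hf]
  refine Finset.sum_congr rfl fun k hk => ?_
  have hlt := hP.2.2 k (Finset.mem_range.mp hk)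
  rw [lintegral_indicator_const measurableSet_Ioc, Real.volume_Ioc, mul_comm,
    ← hRhom _ (hP.mem_Icc (Finset.mem_range.mp hk).le) _ (sub_pos.mpr hlt),
    smul_setAverage_Ioc _ hlt]

theorem partSum_le_one_add_mul_lintegral [CompleteSpace X] (hP : IsPartition s t m P)
    (hR : ∀ u ∈ Icc s t, IsLscSublinear (R u))
    (hrel : ∀ u v, s ≤ u → u ≤ v → v ≤ t → ∀ x, R u x ≤ (1 + ρ (v - u)) * R v x)
    (hf' : IntegrableOn f' (Ioc s t))
    (hf : ∀ u v, s ≤ u → u ≤ v → v ≤ t → f v - f u = ∫ x in Ioc u v, f' x) {ε : ℝ≥0}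
    (hε : ∀ k < m, ∀ τ ∈ Ioc (P k) (P (k + 1)), ρ (τ - P k) ≤ ε) :
    partSum R f m P ≤ (1 + ε) * ∫⁻ τ in Ioc s t, R τ (f' τ) := by
  rw [partSum_eq_sum_setIntegral hP hf, ← lintegral_const_mul' _ _ (by simp),
    ← hP.sum_lintegral_Ioc]
  refine Finset.sum_le_sum fun k hk => ?_
  have hk := Finset.mem_range.mp hk
  have : IsFiniteMeasure (volume.restrict (Ioc (P k) (P (k + 1)))) :=
    isFiniteMeasure_restrict.mpr measure_Ioc_lt_top.ne
  calc R (P k) (∫ x in Ioc (P k) (P (k + 1)), f' x)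
      ≤ ∫⁻ τ in Ioc (P k) (P (k + 1)), R (P k) (f' τ) :=
        (hR _ (hP.mem_Icc hk.le)).map_integral_le (hf'.mono_set (hP.Ioc_subset hk))
    _ ≤ ∫⁻ τ in Ioc (P k) (P (k + 1)), (1 + ε) * R τ (f' τ) :=
        setLIntegral_mono' measurableSet_Ioc fun τ hτ =>
          (hrel _ _ (hP.mem_Icc hk.le).1 hτ.1.le (hP.Ioc_subset hk hτ).2 _).trans
            (by gcongr; exact hε k hk τ hτ)

end Partition

variable {n : ℕ → ℕ} {P : ℕ → ℕ → ℝ}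

theorem limsup_partSum_le_lintegral [CompleteSpace X] (hP : IsFineSeq s t n P)
    (hR : ∀ u ∈ Icc s t, IsLscSublinear (R u)) (hρ : Tendsto ρ (𝓝[Icc 0 (t - s)] 0) (𝓝 0))
    (hrel : ∀ u v, s ≤ u → u ≤ v → v ≤ t → ∀ x, R u x ≤ (1 + ρ (v - u)) * R v x)
    (hf' : IntegrableOn f' (Ioc s t))
    (hf : ∀ u v, s ≤ u → u ≤ v → v ≤ t → f v - f u = ∫ x in Ioc u v, f' x) :
    limsup (fun j => partSum R f (n j) (P j)) atTop ≤ ∫⁻ τ in Ioc s t, R τ (f' τ) := by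
  refine ENNReal.le_of_forall_pos_le_one_add_mul fun ε hε =>
    limsup_le_of_le (by isBoundedDefault) ?_
  obtain ⟨δ, hδ, hρδ⟩ := Metric.mem_nhdsWithin_iff.mp
    (hρ (Iic_mem_nhds (by exact_mod_cast hε : (0 : ℝ≥0∞) < ε)))
  filter_upwards [hP.eventually_forall_sub_lt hδ] with j hj
  refine partSum_le_one_add_mul_lintegral (hP.isPartition j) hR hrel hf' hf
    fun k hk τ hτ => hρδ ⟨?_, sub_nonneg.mpr hτ.1.le, ?_⟩
  · rw [Metric.mem_ball, Real.dist_eq, sub_zero, abs_of_pos (sub_pos.mpr hτ.1)]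
    linarith [hj k hk, hτ.2]
  · linarith [((hP.isPartition j).mem_Icc hk.le).1, ((hP.isPartition j).Ioc_subset hk hτ).2]

theorem ae_le_liminf_partStep [CompleteSpace X] (hP : IsFineSeq s t n P)
    (hRlsc : ∀ u ∈ Icc s t, LowerSemicontinuous (R u))
    (hρ : Tendsto ρ (𝓝[Icc 0 (t - s)] 0) (𝓝 0))
    (hrel : ∀ u v, s ≤ u → u ≤ v → v ≤ t → ∀ x, R v x ≤ (1 + ρ (v - u)) * R u x)
    (hf' : IntegrableOn f' (Ioc s t)) :
    ∀ᵐ τ ∂volume.restrict (Ioc s t),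
      R τ (f' τ) ≤ liminf (fun j => partStep R f' (n j) (P j) τ) atTop := by
  filter_upwards [ae_tendsto_setAverage_Ioc measurableSet_Ioc hf',
    ae_restrict_mem measurableSet_Ioc] with τ hLebesgue hτ
  choose κ hκ hτκ using fun j => (hP.isPartition j).exists_mem_Ioc hτ
  have hlen := hP.tendsto_sub hκ
  have hmean : Tendsto (fun j => ⨍ x in Ioc (P j (κ j)) (P j (κ j + 1)), f' x) atTop
      (𝓝 (f' τ)) :=
    hLebesgue _ _ hτκ (fun j => (hP.isPartition j).Ioc_subset (hκ j)) hlen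
  have hoffset : Tendsto (fun j => τ - P j (κ j)) atTop (𝓝[Icc 0 (t - s)] 0) :=
    tendsto_nhdsWithin_iff.mpr
      ⟨squeeze_zero (fun j => sub_nonneg.mpr (hτκ j).1.le)
        (fun j => by linarith [(hτκ j).2]) hlen,
      .of_forall fun j => ⟨sub_nonneg.mpr (hτκ j).1.le,
        by linarith [((hP.isPartition j).mem_Icc (hκ j).le).1, hτ.2]⟩⟩
  have hfactor : Tendsto (fun j => 1 + ρ (τ - P j (κ j))) atTop (𝓝 1) := by
    simpa using (hρ.comp hoffset).const_add 1
  calc R τ (f' τ)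
      ≤ liminf (fun j => R τ (⨍ x in Ioc (P j (κ j)) (P j (κ j + 1)), f' x)) atTop := by
        rw [le_liminf_iff]
        exact fun y hy => hmean.eventually (hRlsc τ (Ioc_subset_Icc_self hτ) (f' τ) y hy)
    _ ≤ liminf (fun j => (1 + ρ (τ - P j (κ j))) * partStep R f' (n j) (P j) τ) atTop :=
        liminf_le_liminf <| .of_forall fun j =>
          (hrel _ _ ((hP.isPartition j).mem_Icc (hκ j).le).1 (hτκ j).1.le hτ.2 _).trans
            (by gcongr; exact le_partStep f' (hκ j) (hτκ j))
    _ ≤ liminf (fun j => partStep R f' (n j) (P j) τ) atTop :=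
        ENNReal.liminf_mul_le_of_tendsto_one hfactor

theorem lintegral_le_liminf_partSum [CompleteSpace X] (hP : IsFineSeq s t n P)
    (hRhom : ∀ u ∈ Icc s t, ∀ l : ℝ, 0 < l → ∀ v : X, R u (l • v) = ENNReal.ofReal l * R u v)
    (hRlsc : ∀ u ∈ Icc s t, LowerSemicontinuous (R u))
    (hρ : Tendsto ρ (𝓝[Icc 0 (t - s)] 0) (𝓝 0))
    (hrel : ∀ u v, s ≤ u → u ≤ v → v ≤ t → ∀ x, R v x ≤ (1 + ρ (v - u)) * R u x)
    (hf' : IntegrableOn f' (Ioc s t))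
    (hf : ∀ u v, s ≤ u → u ≤ v → v ≤ t → f v - f u = ∫ x in Ioc u v, f' x) :
    ∫⁻ τ in Ioc s t, R τ (f' τ) ≤ liminf (fun j => partSum R f (n j) (P j)) atTop :=
  calc ∫⁻ τ in Ioc s t, R τ (f' τ)
      ≤ ∫⁻ τ in Ioc s t, liminf (fun j => partStep R f' (n j) (P j) τ) atTop :=
        lintegral_mono_ae (ae_le_liminf_partStep hP hRlsc hρ hrel hf')
    _ ≤ ∫⁻ τ, liminf (fun j => partStep R f' (n j) (P j) τ) atTop :=
        setLIntegral_le_lintegral _ _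
    _ ≤ liminf (fun j => ∫⁻ τ, partStep R f' (n j) (P j) τ) atTop :=
        lintegral_liminf_le fun _ => measurable_partStep f'
    _ = liminf (fun j => partSum R f (n j) (P j)) atTop := by
        simp_rw [lintegral_partStep (hP.isPartition _) hRhom hf]

theorem rVarEq_setLIntegral [CompleteSpace X] (hR : ∀ u ∈ Icc s t, IsLscSublinear (R u))
    (hρ : Tendsto ρ (𝓝[Icc 0 (t - s)] 0) (𝓝 0))
    (hrel : ∀ u v, s ≤ u → u ≤ v → v ≤ t → ∀ x,
      R v x ≤ (1 + ρ (v - u)) * R u x ∧ R u x ≤ (1 + ρ (v - u)) * R v x)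
    (hf' : IntegrableOn f' (Ioc s t))
    (hf : ∀ u v, s ≤ u → u ≤ v → v ≤ t → f v - f u = ∫ x in Ioc u v, f' x) :
    RVarEq R f s t (∫⁻ τ in Icc s t, R τ (f' τ)) := by
  intro n P hP
  rw [← setLIntegral_congr Ioc_ae_eq_Icc]
  exact tendsto_of_le_liminf_of_limsup_le
    (lintegral_le_liminf_partSum hP (fun u hu => (hR u hu).smul) (fun u hu => (hR u hu).lsc) hρ
      (fun u v hu huv hv x => (hrel u v hu huv hv x).1) hf' hf)
    (limsup_partSum_le_lintegral hP hR hρ (fun u v hu huv hv x => (hrel u v hu huv hv x).2) hf' hf)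

end RVariation

theorem HasACDeriv.sub_eq_setIntegral {X : Type*} [NormedAddCommGroup X] [NormedSpace ℝ X]
    [CompleteSpace X] {a b : ℝ} {f f' : ℝ → X} (h : HasACDeriv a b f f') {u v : ℝ}
    (hu : a ≤ u) (huv : u ≤ v) (hv : v ≤ b) : f v - f u = ∫ x in Ioc u v, f' x := by
  have hmem : ∀ x ∈ Icc a b, IntervalIntegrable f' volume a x := fun x hx =>
    h.1.mono_set (uIcc_subset_uIcc_left (by rwa [uIcc_of_le (hu.trans (huv.trans hv))]))
  rw [h.2 v ⟨hu.trans huv, hv⟩, h.2 u ⟨hu, huv.trans hv⟩, add_sub_add_left_eq_sub,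
    intervalIntegral.integral_interval_sub_left (hmem v ⟨hu.trans huv, hv⟩)
      (hmem u ⟨hu, huv.trans hv⟩),
    intervalIntegral.integral_of_le huv]

theorem stmt8_general
    {X : Type*} [NormedAddCommGroup X] [NormedSpace ℝ X] [CompleteSpace X]
    (a b : ℝ)
    (ψ : X → ℝ≥0∞)
    (R : ℝ → X → ℝ≥0∞) (αl : ℝ) (hαl : 0 < αl)
    (hRconv : ∀ t ∈ Icc a b, ∀ u v : X, ∀ θ : ℝ, θ ∈ Icc (0:ℝ) 1 →
      R t (θ • u + (1 - θ) • v) ≤ ENNReal.ofReal θ * R t u + ENNReal.ofReal (1 - θ) * R t v)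
    (hRhom : ∀ t ∈ Icc a b, ∀ l : ℝ, 0 < l → ∀ v : X, R t (l • v) = ENNReal.ofReal l * R t v)
    (hRlsc : ∀ t ∈ Icc a b, LowerSemicontinuous (R t))
    (hR0 : ∀ t ∈ Icc a b, R t 0 = 0)
    (hRlow : ∀ t ∈ Icc a b, ∀ v : X, ENNReal.ofReal αl * ψ v ≤ R t v)
    (σ : ℝ → ℝ) (hσcont : ContinuousOn σ (Icc 0 (b - a)))
    (hσ0 : σ 0 = 0)
    (hRtime : ∀ s t : ℝ, a ≤ s → s ≤ t → t ≤ b → ∀ v : X, ψ v ≠ ⊤ →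
      R t v ≤ R s v + ψ v * ENNReal.ofReal (σ (t - s)) ∧
        R s v ≤ R t v + ψ v * ENNReal.ofReal (σ (t - s)))
    (f f' : ℝ → X) (hAC : HasACDeriv a b f f') :
    ∀ s t : ℝ, a ≤ s → s ≤ t → t ≤ b →
      RVarEq R f s t (∫⁻ τ in Icc s t, R τ (f' τ)) := by
  intro s t has hst htb
  have hsub : Icc s t ⊆ Icc a b := Icc_subset_Icc has htb
  refine rVarEq_setLIntegral (ρ := fun d => ENNReal.ofReal (σ d / αl))
    (fun u hu => ⟨hR0 u (hsub hu), hRconv u (hsub hu), hRhom u (hsub hu), hRlsc u (hsub hu)⟩)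
    ?_ ?_ (hAC.1.1.mono_set (Ioc_subset_Ioc has htb))
    fun u v hu huv hv => hAC.sub_eq_setIntegral (has.trans hu) huv (hv.trans htb)
  · have hσ : ContinuousWithinAt σ (Icc 0 (t - s)) 0 :=
      (hσcont 0 ⟨le_rfl, by linarith⟩).mono (Icc_subset_Icc_right (by linarith))
    simpa [hσ0] using ENNReal.tendsto_ofReal (hσ.tendsto.div_const αl)
  · intro u v hu huv hv x
    have hua : a ≤ u := has.trans hu
    have hvb : v ≤ b := hv.trans htb
    exact ⟨ENNReal.le_one_add_mul_of_le_add hαl (hRlow u (hsub ⟨hu, huv.trans hv⟩) x)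
        fun hx => (hRtime u v hua huv hvb x hx).1,
      ENNReal.le_one_add_mul_of_le_add hαl (hRlow v (hsub ⟨hu.trans huv, hv⟩) x)
        fun hx => (hRtime u v hua huv hvb x hx).2⟩

theorem stmt8
    {X : Type*} [NormedAddCommGroup X] [NormedSpace ℝ X] [CompleteSpace X]
    (hrefl : Function.Surjective (NormedSpace.inclusionInDoubleDual ℝ X))
    (a b : ℝ) (hab : a ≤ b)
    (ψ : X → ℝ≥0∞) (c : ℝ) (hc : 0 < c)
    (hψ0 : ψ 0 = 0)
    (hψconv : ∀ u v : X, ∀ θ : ℝ, θ ∈ Icc (0:ℝ) 1 →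
      ψ (θ • u + (1 - θ) • v) ≤ ENNReal.ofReal θ * ψ u + ENNReal.ofReal (1 - θ) * ψ v)
    (hψhom : ∀ l : ℝ, 0 < l → ∀ v : X, ψ (l • v) = ENNReal.ofReal l * ψ v)
    (hψlsc : LowerSemicontinuous ψ)
    (hψcoer : ∀ v : X, ENNReal.ofReal (c * ‖v‖) ≤ ψ v)
    (R : ℝ → X → ℝ≥0∞) (αl αu : ℝ) (hαl : 0 < αl) (hαlu : αl ≤ αu)
    (hRconv : ∀ t ∈ Icc a b, ∀ u v : X, ∀ θ : ℝ, θ ∈ Icc (0:ℝ) 1 →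
      R t (θ • u + (1 - θ) • v) ≤ ENNReal.ofReal θ * R t u + ENNReal.ofReal (1 - θ) * R t v)
    (hRhom : ∀ t ∈ Icc a b, ∀ l : ℝ, 0 < l → ∀ v : X, R t (l • v) = ENNReal.ofReal l * R t v)
    (hRlsc : ∀ t ∈ Icc a b, LowerSemicontinuous (R t))
    (hR0 : ∀ t ∈ Icc a b, R t 0 = 0)
    (hRlow : ∀ t ∈ Icc a b, ∀ v : X, ENNReal.ofReal αl * ψ v ≤ R t v)
    (hRup : ∀ t ∈ Icc a b, ∀ v : X, R t v ≤ ENNReal.ofReal αu * ψ v)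
    (σ : ℝ → ℝ) (hσcont : ContinuousOn σ (Icc 0 (b - a)))
    (hσmono : MonotoneOn σ (Icc 0 (b - a)))
    (hσ0 : σ 0 = 0) (hσnonneg : ∀ s : ℝ, 0 ≤ σ s)
    (hRtime : ∀ s t : ℝ, a ≤ s → s ≤ t → t ≤ b → ∀ v : X, ψ v ≠ ⊤ →
      R t v ≤ R s v + ψ v * ENNReal.ofReal (σ (t - s)) ∧
        R s v ≤ R t v + ψ v * ENNReal.ofReal (σ (t - s)))
    -- `f` is `R`-absolutely continuous
    (f f' : ℝ → X) (hAC : HasACDeriv a b f f')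
    (hRAC : (∫⁻ τ in Icc a b, R τ (f' τ)) < ⊤) :
    ∀ s t : ℝ, a ≤ s → s ≤ t → t ≤ b →
      RVarEq R f s t (∫⁻ τ in Icc s t, R τ (f' τ)) :=
  stmt8_general a b ψ R αl hαl hRconv hRhom hRlsc hR0 hRlow σ hσcont hσ0 hRtime f f' hAC
end

section
/- Let X be a reflexive Banach space and R:[a,b]×X→[0,∞] a ψ-regular functional. Let {f_j} be a sequence of functions from [a,b] to X such that f_j(t) converges weakly to f(t) for every t∈[a,b]. Then V_R(f;s,t) ≤ liminf_{j→∞} V_R(f_j;s,t) for every a≤s≤t≤b. -/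
open MeasureTheory Set Filter ENNReal

/-!
Along the uniform partition of `[s, t]` into `n` steps, weak lower semicontinuity of the convex
l.s.c. functionals `R (t_k) ·` (Hahn–Banach) and superadditivity of `liminf` give
`Σ R (t_k) (Δ_k f) ≤ liminf_j Σ R (t_k) (Δ_k f_j)`. Conversely, every `R`-variation dominates
such a coarse sum up to a factor: refine each step, use subadditivity of `R (t_k) ·`, and move
the time argument from `t_k` to the refined points at the cost of the factor
`1 + σ ((t - s) / n) / α_*`, by the time-continuity estimate and `α_* ψ ≤ R`. Hence the coarse
sums of `f` are at most `(1 + σ ((t - s) / n) / α_*) · liminf_j V_R(f_j)`, and `n → ∞` gives the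
claim.
-/

open Topology

theorem ENNReal.le_liminf_add {ι : Type*} {l : Filter ι} {u v : ι → ℝ≥0∞} :
    liminf u l + liminf v l ≤ liminf (u + v) l := by
  refine (le_liminf_iff).2 fun c hc => ?_
  rcases eq_or_ne (liminf u l) 0 with hu | hu
  · rw [hu, zero_add] at hc
    filter_upwards [eventually_lt_of_lt_liminf hc] with j hj
    exact hj.trans_le le_add_self
  rcases eq_or_ne (liminf v l) 0 with hv | hv
  · rw [hv, add_zero] at hc
    filter_upwards [eventually_lt_of_lt_liminf hc] with j hj
    exact hj.trans_le le_self_add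
  obtain ⟨a, ha, b, hb, hab⟩ := ENNReal.exists_lt_add_of_lt_add hc hu hv
  filter_upwards [eventually_lt_of_lt_liminf ha, eventually_lt_of_lt_liminf hb] with j hua hvb
  exact hab.trans (ENNReal.add_lt_add hua hvb)

theorem ENNReal.sum_liminf_le_liminf_sum {ι κ : Type*} {l : Filter ι} (s : Finset κ)
    (u : κ → ι → ℝ≥0∞) :
    ∑ k ∈ s, liminf (u k) l ≤ liminf (fun j => ∑ k ∈ s, u k j) l := by
  classical
  induction s using Finset.induction_on with
  | empty => simp
  | insert k s hk ih =>
    simp only [Finset.sum_insert hk]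
    exact (add_le_add le_rfl ih).trans ENNReal.le_liminf_add

theorem Finset.sum_range_mul_eq_sum_sum {M : Type*} [AddCommMonoid M] (F : ℕ → M) (n p : ℕ) :
    ∑ j ∈ range (n * p), F j = ∑ k ∈ range n, ∑ i ∈ range p, F (k * p + i) := by
  induction n with
  | zero => simp
  | succ n ih => rw [Nat.succ_mul, Finset.sum_range_add, ih, Finset.sum_range_succ]

theorem ENNReal.le_one_add_div_mul {a b p d α : ℝ≥0∞} (hα : α ≠ 0) (hα' : α ≠ ⊤)
    (hp : α * p ≤ b) (h : p ≠ ⊤ → a ≤ b + p * d) : a ≤ (1 + d / α) * b := by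
  rcases eq_or_ne p ⊤ with rfl | hp'
  · rw [ENNReal.mul_top hα, top_le_iff] at hp
    simp [hp]
  have hpb : p ≤ b / α := (ENNReal.le_div_iff_mul_le (Or.inl hα) (Or.inl hα')).2 (by rwa [mul_comm])
  calc a ≤ b + p * d := h hp'
    _ ≤ b + b / α * d := by gcongr
    _ = (1 + d / α) * b := by simp only [div_eq_mul_inv]; ring

section ConvexFunctional

variable {E : Type*} [AddCommGroup E] [Module ℝ E]

theorem quasiconvexOn_univ_of_convex {F : E → ℝ≥0∞}
    (hconv : ∀ u v : E, ∀ θ ∈ Icc (0 : ℝ) 1,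
      F (θ • u + (1 - θ) • v) ≤ ENNReal.ofReal θ * F u + ENNReal.ofReal (1 - θ) * F v) :
    QuasiconvexOn ℝ univ F := by
  intro M u hu v hv θ η hθ hη hθη
  obtain rfl : η = 1 - θ := by linarith
  refine ⟨mem_univ _, (hconv u v θ ⟨hθ, by linarith⟩).trans ?_⟩
  calc ENNReal.ofReal θ * F u + ENNReal.ofReal (1 - θ) * F v
      ≤ ENNReal.ofReal θ * M + ENNReal.ofReal (1 - θ) * M := by gcongr; exacts [hu.2, hv.2]
    _ = M := by rw [← add_mul, ← ENNReal.ofReal_add hθ hη]; simp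

theorem map_add_le_of_convex_of_posHomogeneous {F : E → ℝ≥0∞}
    (hconv : ∀ u v : E, ∀ θ ∈ Icc (0 : ℝ) 1,
      F (θ • u + (1 - θ) • v) ≤ ENNReal.ofReal θ * F u + ENNReal.ofReal (1 - θ) * F v)
    (hhom : ∀ l : ℝ, 0 < l → ∀ v : E, F (l • v) = ENNReal.ofReal l * F v) (u v : E) :
    F (u + v) ≤ F u + F v := by
  have hhalf : ∀ w : E, ENNReal.ofReal (1 / 2) * F ((2 : ℝ) • w) = F w := fun w => by
    rw [hhom 2 two_pos, ← mul_assoc, ← ENNReal.ofReal_mul (by norm_num)]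
    norm_num
  have h := hconv ((2 : ℝ) • u) ((2 : ℝ) • v) (1 / 2) ⟨by norm_num, by norm_num⟩
  rwa [smul_smul, smul_smul, show (1 - 1 / 2 : ℝ) = 1 / 2 by norm_num, hhalf, hhalf,
    show (1 / 2 * 2 : ℝ) = 1 by norm_num, one_smul, one_smul] at h

end ConvexFunctional

theorem LowerSemicontinuous.le_liminf_of_forall_tendsto_dual {E β ι : Type*}
    [AddCommGroup E] [Module ℝ E] [TopologicalSpace E] [IsTopologicalAddGroup E]
    [ContinuousSMul ℝ E] [LocallyConvexSpace ℝ E] [CompleteLinearOrder β] [DenselyOrdered β]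
    {F : E → β} (hlsc : LowerSemicontinuous F) (hconv : QuasiconvexOn ℝ univ F)
    {l : Filter ι} {g : ι → E} {x : E}
    (hg : ∀ ξ : StrongDual ℝ E, Tendsto (fun j => ξ (g j)) l (𝓝 (ξ x))) :
    F x ≤ liminf (fun j => F (g j)) l := by
  by_contra! hlt
  obtain ⟨M, hM, hMx⟩ := exists_between hlt
  have hclosed : IsClosed {y ∈ univ | F y ≤ M} := by
    simpa [Set.preimage, Iic] using hlsc.isClosed_preimage M
  obtain ⟨ξ, c, hξ, hξx⟩ :=
    geometric_hahn_banach_closed_point (hconv M) hclosed fun hx => hMx.not_ge hx.2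
  have hoften : ∃ᶠ j in l, ξ (g j) < c :=
    (frequently_lt_of_liminf_lt (by isBoundedDefault) hM).mono fun j hj => hξ _ ⟨mem_univ _, hj.le⟩
  exact (hoften.and_eventually ((hg ξ).eventually (eventually_gt_nhds hξx))).exists.elim
    fun j hj => (hj.1.trans hj.2).false

noncomputable def uniformPartition (s t : ℝ) (n k : ℕ) : ℝ := s + k * ((t - s) / n)

theorem uniformPartition_sub (s t : ℝ) (n i j : ℕ) :
    uniformPartition s t n j - uniformPartition s t n i = ((j : ℝ) - i) * ((t - s) / n) := by
  unfold uniformPartition; ring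

theorem uniformPartition_mul (s t : ℝ) (n k : ℕ) {p : ℕ} (hp : p ≠ 0) :
    uniformPartition s t (n * p) (k * p) = uniformPartition s t n k := by
  unfold uniformPartition
  have hp' : (p : ℝ) ≠ 0 := by exact_mod_cast hp
  rw [Nat.cast_mul, Nat.cast_mul, ← div_div, mul_assoc, mul_div_cancel₀ _ hp']

section UniformPartition

variable {s t : ℝ}

theorem uniformPartition_mono (hst : s ≤ t) (n : ℕ) : Monotone (uniformPartition s t n) :=
  fun i j hij => by
    have hdiff := uniformPartition_sub s t n i j
    have hnonneg : (0 : ℝ) ≤ ((j : ℝ) - i) * ((t - s) / n) :=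
      mul_nonneg (sub_nonneg.2 (by exact_mod_cast hij))
        (div_nonneg (sub_nonneg.2 hst) n.cast_nonneg)
    linarith

theorem uniformPartition_self {n : ℕ} (hn : n ≠ 0) : uniformPartition s t n n = t := by
  have hn' : (n : ℝ) ≠ 0 := by exact_mod_cast hn
  unfold uniformPartition; field_simp; ring

theorem uniformPartition_mem_Icc (hst : s ≤ t) {n k : ℕ} (hk : k ≤ n) :
    uniformPartition s t n k ∈ Icc s t := by
  rcases n.eq_zero_or_pos with rfl | hn
  · obtain rfl := Nat.le_zero.1 hk
    simp [uniformPartition, hst]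
  constructor
  · simpa [uniformPartition] using uniformPartition_mono hst n k.zero_le
  · simpa [uniformPartition_self hn.ne'] using uniformPartition_mono hst n hk

theorem isFineSeq_uniformPartition (hst : s < t) {n : ℕ → ℕ} (hn : ∀ j, 0 < n j)
    (hlim : Tendsto n atTop atTop) :
    IsFineSeq s t n fun j => uniformPartition s t (n j) := by
  have hstep : ∀ j k, uniformPartition s t (n j) (k + 1) - uniformPartition s t (n j) k =
      (t - s) / n j := fun j k => by rw [uniformPartition_sub]; push_cast; ring
  refine ⟨fun j => by simp [uniformPartition], fun j => uniformPartition_self (hn j).ne',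
    fun j k _ => ?_, fun ε hε => ?_⟩
  · have hpos : 0 < (t - s) / n j := div_pos (by linarith) (by exact_mod_cast hn j)
    linarith [hstep j k]
  · have hmesh : Tendsto (fun j => (t - s) / n j) atTop (𝓝 0) :=
      tendsto_const_nhds.div_atTop (tendsto_natCast_atTop_atTop.comp hlim)
    obtain ⟨N, hN⟩ := eventually_atTop.1 (hmesh.eventually (gt_mem_nhds hε))
    exact ⟨N, fun j hj k _ => (hstep j k).trans_lt (hN j hj)⟩

end UniformPartition

theorem RVarEq.eq_zero {X : Type*} [NormedAddCommGroup X] {R : ℝ → X → ℝ≥0∞} {f : ℝ → X}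
    {s : ℝ} {V : ℝ≥0∞} (hV : RVarEq R f s s V) : V = 0 := by
  have hfine : IsFineSeq s s (fun _ => 0) fun _ _ => s :=
    ⟨fun _ => rfl, fun _ => rfl, fun _ _ hk => absurd hk (Nat.not_lt_zero _),
      fun _ _ => ⟨0, fun _ _ _ hk => absurd hk (Nat.not_lt_zero _)⟩⟩
  have hlim := hV _ _ hfine
  simp only [partSum, Finset.range_zero, Finset.sum_empty] at hlim
  exact tendsto_nhds_unique hlim tendsto_const_nhds

section Variation

variable {X : Type*} [NormedAddCommGroup X] {R : ℝ → X → ℝ≥0∞}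

theorem partSum_comp_mul_le (g : ℝ → X) (Q : ℕ → ℝ) (n p : ℕ) (C : ℝ≥0∞)
    (hadd : ∀ k < n, ∀ u v, R (Q (k * p)) (u + v) ≤ R (Q (k * p)) u + R (Q (k * p)) v)
    (hzero : ∀ k < n, R (Q (k * p)) 0 = 0)
    (hcmp : ∀ k < n, ∀ i < p, ∀ v, R (Q (k * p)) v ≤ C * R (Q (k * p + i)) v) :
    partSum R g n (fun k => Q (k * p)) ≤ C * partSum R g (n * p) Q := by
  have htel : ∀ k, g (Q ((k + 1) * p)) - g (Q (k * p)) =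
      ∑ i ∈ Finset.range p, (g (Q (k * p + i + 1)) - g (Q (k * p + i))) := fun k => by
    have hsum := Finset.sum_range_sub (fun i => g (Q (k * p + i))) p
    simp only [add_zero, ← add_assoc] at hsum
    rw [hsum, add_mul, one_mul]
  calc partSum R g n (fun k => Q (k * p))
      ≤ ∑ k ∈ Finset.range n, ∑ i ∈ Finset.range p,
          R (Q (k * p)) (g (Q (k * p + i + 1)) - g (Q (k * p + i))) := by
        refine Finset.sum_le_sum fun k hk => ?_
        rw [htel]
        exact Finset.le_sum_of_subadditive _ (hzero k (Finset.mem_range.1 hk)).le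
          (hadd k (Finset.mem_range.1 hk)) _ _
    _ ≤ ∑ k ∈ Finset.range n, ∑ i ∈ Finset.range p,
          C * R (Q (k * p + i)) (g (Q (k * p + i + 1)) - g (Q (k * p + i))) := by
        gcongr with k hk i hi
        exact hcmp k (Finset.mem_range.1 hk) i (Finset.mem_range.1 hi) _
    _ = C * partSum R g (n * p) Q := by
        simp only [partSum, Finset.sum_range_mul_eq_sum_sum, Finset.mul_sum]

theorem partSum_uniformPartition_le_of_rVarEq {g : ℝ → X} {s t : ℝ} {W : ℝ≥0∞}
    (hst : s < t) (hg : RVarEq R g s t W)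
    (hadd : ∀ τ ∈ Icc s t, ∀ u v, R τ (u + v) ≤ R τ u + R τ v)
    (hzero : ∀ τ ∈ Icc s t, R τ 0 = 0) {n : ℕ} (hn : 0 < n) {C : ℝ≥0∞} (hC : C ≠ ⊤)
    (hcmp : ∀ τ₀ τ₁, s ≤ τ₀ → τ₀ ≤ τ₁ → τ₁ ≤ t → τ₁ - τ₀ ≤ (t - s) / n →
      ∀ v, R τ₀ v ≤ C * R τ₁ v) :
    partSum R g n (uniformPartition s t n) ≤ C * W := by
  have hrefine : ∀ p : ℕ, partSum R g n (uniformPartition s t n) ≤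
      C * partSum R g (n * (p + 1)) (uniformPartition s t (n * (p + 1))) := by
    intro p
    set Q := uniformPartition s t (n * (p + 1))
    have hQ : ∀ k, Q (k * (p + 1)) = uniformPartition s t n k :=
      fun k => uniformPartition_mul s t n k p.succ_ne_zero
    have hmem : ∀ k < n, Q (k * (p + 1)) ∈ Icc s t := fun k hk =>
      hQ k ▸ uniformPartition_mem_Icc hst.le hk.le
    rw [show uniformPartition s t n = fun k => Q (k * (p + 1)) from funext fun k => (hQ k).symm]
    refine partSum_comp_mul_le g Q n (p + 1) C (fun k hk => hadd _ (hmem k hk))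
      (fun k hk => hzero _ (hmem k hk)) fun k hk i hi v => hcmp _ _ (hmem k hk).1 ?_ ?_ ?_ v
    · exact uniformPartition_mono hst.le _ (Nat.le_add_right _ _)
    · exact (uniformPartition_mem_Icc hst.le (by nlinarith)).2
    · have hnext : Q (k * (p + 1) + i) ≤ Q ((k + 1) * (p + 1)) :=
        uniformPartition_mono hst.le _ (by nlinarith)
      have hwidth := uniformPartition_sub s t n k (k + 1)
      rw [hQ] at hnext ⊢
      push_cast at hwidth
      linarith
  have hfine := isFineSeq_uniformPartition hst (n := fun p => n * (p + 1))
    (fun p => by positivity)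
    (tendsto_atTop_mono (fun p => Nat.le_mul_of_pos_left _ hn) (tendsto_add_atTop_nat 1))
  exact ge_of_tendsto' (ENNReal.Tendsto.const_mul (hg _ _ hfine) (Or.inr hC)) hrefine

theorem partSum_le_liminf_of_weak [NormedSpace ℝ X] {ι : Type*} {l : Filter ι} {f : ℝ → X}
    {fj : ι → ℝ → X} {n : ℕ} {P : ℕ → ℝ}
    (hlsc : ∀ k < n, LowerSemicontinuous (R (P k)))
    (hconv : ∀ k < n, QuasiconvexOn ℝ univ (R (P k)))
    (hweak : ∀ k ≤ n, ∀ ξ : StrongDual ℝ X,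
      Tendsto (fun j => ξ (fj j (P k))) l (𝓝 (ξ (f (P k))))) :
    partSum R f n P ≤ liminf (fun j => partSum R (fj j) n P) l := by
  refine (Finset.sum_le_sum fun k hk => ?_).trans (ENNReal.sum_liminf_le_liminf_sum _ _)
  have hk := Finset.mem_range.1 hk
  refine (hlsc k hk).le_liminf_of_forall_tendsto_dual (hconv k hk) fun ξ => ?_
  simpa only [map_sub] using (hweak (k + 1) hk ξ).sub (hweak k hk.le ξ)

theorem partSum_uniformPartition_le_mul_liminf [NormedSpace ℝ X] {ι : Type*} {l : Filter ι}
    [l.NeBot] {f : ℝ → X} {fj : ι → ℝ → X} {s t : ℝ} {Vj : ι → ℝ≥0∞} (hst : s < t)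
    (hlsc : ∀ τ ∈ Icc s t, LowerSemicontinuous (R τ))
    (hconv : ∀ τ ∈ Icc s t, QuasiconvexOn ℝ univ (R τ))
    (hadd : ∀ τ ∈ Icc s t, ∀ u v, R τ (u + v) ≤ R τ u + R τ v)
    (hzero : ∀ τ ∈ Icc s t, R τ 0 = 0)
    (hweak : ∀ τ ∈ Icc s t, ∀ ξ : StrongDual ℝ X,
      Tendsto (fun j => ξ (fj j τ)) l (𝓝 (ξ (f τ))))
    (hVj : ∀ j, RVarEq R (fj j) s t (Vj j)) {n : ℕ} (hn : 0 < n) {C : ℝ≥0∞} (hC : C ≠ ⊤)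
    (hcmp : ∀ τ₀ τ₁, s ≤ τ₀ → τ₀ ≤ τ₁ → τ₁ ≤ t → τ₁ - τ₀ ≤ (t - s) / n →
      ∀ v, R τ₀ v ≤ C * R τ₁ v) :
    partSum R f n (uniformPartition s t n) ≤ C * liminf Vj l := by
  have hmem : ∀ k ≤ n, uniformPartition s t n k ∈ Icc s t :=
    fun k hk => uniformPartition_mem_Icc hst.le hk
  calc partSum R f n (uniformPartition s t n)
      ≤ liminf (fun j => partSum R (fj j) n (uniformPartition s t n)) l :=
        partSum_le_liminf_of_weak (fun k hk => hlsc _ (hmem k hk.le))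
          (fun k hk => hconv _ (hmem k hk.le)) fun k hk => hweak _ (hmem k hk)
    _ ≤ liminf (fun j => C * Vj j) l :=
        liminf_le_liminf (Eventually.of_forall fun j =>
          partSum_uniformPartition_le_of_rVarEq hst (hVj j) hadd hzero hn hC hcmp)
    _ = C * liminf Vj l := ENNReal.liminf_const_mul_of_ne_top hC

theorem RVarEq.le_of_forall_partSum_uniformPartition_le {f : ℝ → X} {s t : ℝ} {V L : ℝ≥0∞}
    {C : ℕ → ℝ≥0∞} (hst : s < t) (hV : RVarEq R f s t V) (hC : Tendsto C atTop (𝓝 1))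
    (hbound : ∀ m, partSum R f (m + 1) (uniformPartition s t (m + 1)) ≤ C m * L) : V ≤ L := by
  have hfine := isFineSeq_uniformPartition hst (n := fun m => m + 1) (fun _ => Nat.succ_pos _)
    (tendsto_add_atTop_nat 1)
  simpa using le_of_tendsto_of_tendsto' (hV _ _ hfine)
    (ENNReal.Tendsto.mul_const hC (Or.inl one_ne_zero)) hbound

end Variation

theorem le_one_add_mul_of_time_shift {X : Type*} {R : ℝ → X → ℝ≥0∞} {ψ : X → ℝ≥0∞}
    {σ : ℝ → ℝ} {a b αl : ℝ} (hαl : 0 < αl)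
    (hRlow : ∀ t ∈ Icc a b, ∀ v : X, ENNReal.ofReal αl * ψ v ≤ R t v)
    (hσmono : MonotoneOn σ (Icc 0 (b - a)))
    (hRtime : ∀ s t : ℝ, a ≤ s → s ≤ t → t ≤ b → ∀ v : X, ψ v ≠ ⊤ →
      R s v ≤ R t v + ψ v * ENNReal.ofReal (σ (t - s)))
    {τ₀ τ₁ h : ℝ} (h₀ : a ≤ τ₀) (h₀₁ : τ₀ ≤ τ₁) (h₁ : τ₁ ≤ b) (hgap : τ₁ - τ₀ ≤ h)
    (hh : h ≤ b - a) (v : X) :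
    R τ₀ v ≤ (1 + ENNReal.ofReal (σ h) / ENNReal.ofReal αl) * R τ₁ v := by
  refine ENNReal.le_one_add_div_mul (by simpa using hαl) ENNReal.ofReal_ne_top
    (hRlow τ₁ ⟨h₀.trans h₀₁, h₁⟩ v) fun hv => (hRtime τ₀ τ₁ h₀ h₀₁ h₁ v hv).trans ?_
  gcongr
  exact hσmono ⟨by linarith, by linarith⟩ ⟨by linarith, hh⟩ hgap

theorem tendsto_comp_div_nat_succ {σ : ℝ → ℝ} {T L : ℝ} (hσ : ContinuousWithinAt σ (Icc 0 L) 0)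
    (hσ0 : σ 0 = 0) (hT : 0 ≤ T) (hTL : T ≤ L) :
    Tendsto (fun m : ℕ => σ (T / (m + 1 : ℕ))) atTop (𝓝 0) := by
  have h : Tendsto (fun m : ℕ => T / (m + 1 : ℕ)) atTop (𝓝[Icc 0 L] 0) :=
    tendsto_nhdsWithin_iff.2 ⟨(tendsto_const_div_atTop_nhds_zero_nat T).comp
      (tendsto_add_atTop_nat 1), Eventually.of_forall fun m =>
        ⟨by positivity, (div_le_self hT (by simp)).trans hTL⟩⟩
  have hlim := hσ.tendsto.comp h
  rwa [hσ0] at hlim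

theorem stmt9_general
    {X : Type*} [NormedAddCommGroup X] [NormedSpace ℝ X]
    (a b : ℝ)
    (ψ : X → ℝ≥0∞)
    (R : ℝ → X → ℝ≥0∞) (αl : ℝ) (hαl : 0 < αl)
    (hRconv : ∀ t ∈ Icc a b, ∀ u v : X, ∀ θ : ℝ, θ ∈ Icc (0:ℝ) 1 →
      R t (θ • u + (1 - θ) • v) ≤ ENNReal.ofReal θ * R t u + ENNReal.ofReal (1 - θ) * R t v)
    (hRhom : ∀ t ∈ Icc a b, ∀ l : ℝ, 0 < l → ∀ v : X, R t (l • v) = ENNReal.ofReal l * R t v)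
    (hRlsc : ∀ t ∈ Icc a b, LowerSemicontinuous (R t))
    (hR0 : ∀ t ∈ Icc a b, R t 0 = 0)
    (hRlow : ∀ t ∈ Icc a b, ∀ v : X, ENNReal.ofReal αl * ψ v ≤ R t v)
    (σ : ℝ → ℝ) (hσcont : ContinuousOn σ (Icc 0 (b - a)))
    (hσmono : MonotoneOn σ (Icc 0 (b - a)))
    (hσ0 : σ 0 = 0)
    (hRtime : ∀ s t : ℝ, a ≤ s → s ≤ t → t ≤ b → ∀ v : X, ψ v ≠ ⊤ →
      R t v ≤ R s v + ψ v * ENNReal.ofReal (σ (t - s)) ∧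
        R s v ≤ R t v + ψ v * ENNReal.ofReal (σ (t - s)))
    (fj : ℕ → ℝ → X) (f : ℝ → X)
    (hweak : ∀ t ∈ Icc a b, ∀ ξ : StrongDual ℝ X,
      Tendsto (fun j => ξ (fj j t)) atTop (nhds (ξ (f t))))
    (s t : ℝ) (hs : a ≤ s) (hst : s ≤ t) (htb : t ≤ b)
    (V : ℝ≥0∞) (Vj : ℕ → ℝ≥0∞)
    (hV : RVarEq R f s t V) (hVj : ∀ j, RVarEq R (fj j) s t (Vj j)) :
    V ≤ Filter.liminf Vj atTop := by
  rcases hst.eq_or_lt with rfl | hst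
  · simp [hV.eq_zero]
  have hsub : Icc s t ⊆ Icc a b := Icc_subset_Icc hs htb
  set C : ℕ → ℝ≥0∞ := fun m => 1 + ENNReal.ofReal (σ ((t - s) / (m + 1 : ℕ))) / ENNReal.ofReal αl
  have hαl' : ENNReal.ofReal αl ≠ 0 := (ENNReal.ofReal_pos.2 hαl).ne'
  have hC : Tendsto C atTop (𝓝 1) := by
    have hσlim := tendsto_comp_div_nat_succ (hσcont 0 ⟨le_rfl, by linarith⟩) hσ0
      (sub_nonneg.2 hst.le) (by linarith : t - s ≤ b - a)
    simpa [C] using (tendsto_const_nhds (x := (1 : ℝ≥0∞))).add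
      (ENNReal.Tendsto.div_const (ENNReal.tendsto_ofReal hσlim) (Or.inr hαl'))
  refine hV.le_of_forall_partSum_uniformPartition_le hst hC fun m =>
    partSum_uniformPartition_le_mul_liminf hst (fun τ hτ => hRlsc τ (hsub hτ))
      (fun τ hτ => quasiconvexOn_univ_of_convex (hRconv τ (hsub hτ)))
      (fun τ hτ => map_add_le_of_convex_of_posHomogeneous (hRconv τ (hsub hτ)) (hRhom τ (hsub hτ)))
      (fun τ hτ => hR0 τ (hsub hτ)) (fun τ hτ => hweak τ (hsub hτ)) hVj m.succ_pos
      (ENNReal.add_ne_top.2 ⟨ENNReal.one_ne_top, ENNReal.div_ne_top ENNReal.ofReal_ne_top hαl'⟩)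
      fun τ₀ τ₁ h₀ h₀₁ h₁ hgap => le_one_add_mul_of_time_shift hαl hRlow hσmono
        (fun _ _ h h' h'' v hv => (hRtime _ _ h h' h'' v hv).2) (hs.trans h₀) h₀₁ (h₁.trans htb)
        hgap ((div_le_self (by linarith) (by simp)).trans (by linarith))

theorem stmt9
    {X : Type*} [NormedAddCommGroup X] [NormedSpace ℝ X] [CompleteSpace X]
    (hrefl : Function.Surjective (NormedSpace.inclusionInDoubleDual ℝ X))
    (a b : ℝ) (hab : a ≤ b)
    (ψ : X → ℝ≥0∞) (c : ℝ) (hc : 0 < c)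
    (hψ0 : ψ 0 = 0)
    (hψconv : ∀ u v : X, ∀ θ : ℝ, θ ∈ Icc (0:ℝ) 1 →
      ψ (θ • u + (1 - θ) • v) ≤ ENNReal.ofReal θ * ψ u + ENNReal.ofReal (1 - θ) * ψ v)
    (hψhom : ∀ l : ℝ, 0 < l → ∀ v : X, ψ (l • v) = ENNReal.ofReal l * ψ v)
    (hψlsc : LowerSemicontinuous ψ)
    (hψcoer : ∀ v : X, ENNReal.ofReal (c * ‖v‖) ≤ ψ v)
    (R : ℝ → X → ℝ≥0∞) (αl αu : ℝ) (hαl : 0 < αl) (hαlu : αl ≤ αu)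
    (hRconv : ∀ t ∈ Icc a b, ∀ u v : X, ∀ θ : ℝ, θ ∈ Icc (0:ℝ) 1 →
      R t (θ • u + (1 - θ) • v) ≤ ENNReal.ofReal θ * R t u + ENNReal.ofReal (1 - θ) * R t v)
    (hRhom : ∀ t ∈ Icc a b, ∀ l : ℝ, 0 < l → ∀ v : X, R t (l • v) = ENNReal.ofReal l * R t v)
    (hRlsc : ∀ t ∈ Icc a b, LowerSemicontinuous (R t))
    (hR0 : ∀ t ∈ Icc a b, R t 0 = 0)
    (hRlow : ∀ t ∈ Icc a b, ∀ v : X, ENNReal.ofReal αl * ψ v ≤ R t v)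
    (hRup : ∀ t ∈ Icc a b, ∀ v : X, R t v ≤ ENNReal.ofReal αu * ψ v)
    (σ : ℝ → ℝ) (hσcont : ContinuousOn σ (Icc 0 (b - a)))
    (hσmono : MonotoneOn σ (Icc 0 (b - a)))
    (hσ0 : σ 0 = 0) (hσnonneg : ∀ s : ℝ, 0 ≤ σ s)
    (hRtime : ∀ s t : ℝ, a ≤ s → s ≤ t → t ≤ b → ∀ v : X, ψ v ≠ ⊤ →
      R t v ≤ R s v + ψ v * ENNReal.ofReal (σ (t - s)) ∧
        R s v ≤ R t v + ψ v * ENNReal.ofReal (σ (t - s)))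
    (fj : ℕ → ℝ → X) (f : ℝ → X)
    (hweak : ∀ t ∈ Icc a b, ∀ ξ : StrongDual ℝ X,
      Tendsto (fun j => ξ (fj j t)) atTop (nhds (ξ (f t))))
    (s t : ℝ) (hs : a ≤ s) (hst : s ≤ t) (htb : t ≤ b)
    (V : ℝ≥0∞) (Vj : ℕ → ℝ≥0∞)
    (hV : RVarEq R f s t V) (hVj : ∀ j, RVarEq R (fj j) s t (Vj j)) :
    V ≤ Filter.liminf Vj atTop :=
  stmt9_general a b ψ R αl hαl hRconv hRhom hRlsc hR0 hRlow σ hσcont hσmono hσ0 hRtime fj f hweak s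
    t hs hst htb V Vj hV hVj
end

section
/- Let X be a reflexive Banach space, R a ψ-regular functional on [a,b]×X, and let {f_j} ⊆ BV_R([a,b];X) converge pointwise strongly to f ∈ BV_R([a,b];X). Assume that the variation functions t ↦ V_R(f_j;a,t) are continuous for every j, that t ↦ V_R(f;a,t) is continuous, and that V_R(f_j;a,t) → V_R(f;a,t) for every t∈[a,b]. Then f_j → f uniformly on [a,b]. -/
open MeasureTheory Set Filter ENNReal

open scoped Topology

section Controlled

variable {X : Type*} [PseudoMetricSpace X]

def DistControlledOn (κ : ℝ) (g : ℝ → X) (w : ℝ → ℝ) (s : Set ℝ) : Prop :=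
  ∀ x ∈ s, ∀ y ∈ s, x ≤ y → κ * dist (g x) (g y) ≤ w y - w x

variable {κ : ℝ} {s : Set ℝ}

theorem DistControlledOn.monotoneOn {g : ℝ → X} {w : ℝ → ℝ} (hg : DistControlledOn κ g w s)
    (hκ : 0 ≤ κ) : MonotoneOn w s := fun x hx y hy hxy =>
  sub_nonneg.1 ((mul_nonneg hκ dist_nonneg).trans (hg x hx y hy hxy))

theorem DistControlledOn.mul_dist_le {g g' : ℝ → X} {w w' : ℝ → ℝ}
    (hg : DistControlledOn κ g w s) (hg' : DistControlledOn κ g' w' s) (hκ : 0 ≤ κ)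
    {p q y : ℝ} (hp : p ∈ s) (hq : q ∈ s) (hy : y ∈ s) (hpy : p ≤ y) (hyq : y ≤ q) :
    κ * dist (g y) (g' y) ≤ (w q - w p) + κ * dist (g p) (g' p) + (w' q - w' p) := by
  have hwq := hg.monotoneOn hκ hy hq hyq
  have hw'q := hg'.monotoneOn hκ hy hq hyq
  calc κ * dist (g y) (g' y)
      ≤ κ * dist (g p) (g y) + κ * dist (g p) (g' p) + κ * dist (g' p) (g' y) := by
        rw [← mul_add, ← mul_add]
        gcongr
        exact (dist_triangle4 (g y) (g p) (g' p) (g' y)).trans_eq (by rw [dist_comm (g y)])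
    _ ≤ (w y - w p) + κ * dist (g p) (g' p) + (w' y - w' p) := by
        gcongr
        exacts [hg p hp y hy hpy, hg' p hp y hy hpy]
    _ ≤ _ := by linarith

theorem exists_Icc_mem_nhdsWithin_sub_lt {w : ℝ → ℝ} {a b x : ℝ} (hx : x ∈ Icc a b)
    (hw : ContinuousWithinAt w (Icc a b) x) {η : ℝ} (hη : 0 < η) :
    ∃ p ∈ Icc a b, ∃ q ∈ Icc a b, Icc p q ∈ 𝓝[Icc a b] x ∧ w q - w p < η := by
  obtain ⟨δ, hδ, hwδ⟩ := Metric.continuousWithinAt_iff.1 hw (η / 2) (half_pos hη)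
  have hp : max a (x - δ / 2) ∈ Icc a b :=
    ⟨le_max_left _ _, max_le (hx.1.trans hx.2) (by linarith [hx.2])⟩
  have hq : min b (x + δ / 2) ∈ Icc a b :=
    ⟨le_min (hx.1.trans hx.2) (by linarith [hx.1]), min_le_left _ _⟩
  have hwp := hwδ hp <| by
    rw [Real.dist_eq, abs_sub_lt_iff, sub_lt_iff_lt_add', max_lt_iff]
    exact ⟨⟨by linarith [hx.1], by linarith⟩, by linarith [le_max_right a (x - δ / 2)]⟩
  have hwq := hwδ hq <| by
    rw [Real.dist_eq, abs_sub_lt_iff, sub_lt_iff_lt_add, sub_lt_comm, lt_min_iff]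
    exact ⟨by linarith [min_le_right b (x + δ / 2)], by linarith [hx.2], by linarith⟩
  refine ⟨_, hp, _, hq, mem_nhdsWithin_iff_exists_mem_nhds_inter.2
    ⟨Icc (x - δ / 2) (x + δ / 2), Icc_mem_nhds (by linarith) (by linarith),
      fun y ⟨h₁, h₂⟩ => ⟨max_le h₂.1 h₁.1, le_min h₂.2 h₁.2⟩⟩, ?_⟩
  rw [Real.dist_eq, abs_lt] at hwp hwq
  linarith [hwp.2, hwq.1]

theorem tendstoUniformlyOn_Icc_of_distControlledOn {ι : Type*} {l : Filter ι} {a b : ℝ}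
    (hκ : 0 < κ) {g : ι → ℝ → X} {g₀ : ℝ → X} {w : ι → ℝ → ℝ} {w₀ : ℝ → ℝ}
    (hg : ∀ j, DistControlledOn κ (g j) (w j) (Icc a b))
    (hg₀ : DistControlledOn κ g₀ w₀ (Icc a b)) (hw₀ : ContinuousOn w₀ (Icc a b))
    (hgl : ∀ x ∈ Icc a b, Tendsto (g · x) l (𝓝 (g₀ x)))
    (hwl : ∀ x ∈ Icc a b, Tendsto (w · x) l (𝓝 (w₀ x))) :
    TendstoUniformlyOn g g₀ l (Icc a b) := by
  rw [← tendstoLocallyUniformlyOn_iff_tendstoUniformlyOn_of_compact isCompact_Icc,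
    Metric.tendstoLocallyUniformlyOn_iff]
  intro ε hε x hx
  obtain ⟨p, hp, q, hq, hpq, hwpq⟩ :=
    exists_Icc_mem_nhdsWithin_sub_lt hx (hw₀ x hx) (by positivity : 0 < κ * ε / 3)
  have hlim : Tendsto (fun j => (w₀ q - w₀ p) + κ * dist (g₀ p) (g j p) + (w j q - w j p)) l
      (𝓝 ((w₀ q - w₀ p) + κ * dist (g₀ p) (g₀ p) + (w₀ q - w₀ p))) :=
    ((tendsto_const_nhds.add (((hgl p hp).dist tendsto_const_nhds).const_mul κ)).add
      ((hwl q hq).sub (hwl p hp))).congr' (Eventually.of_forall fun j => by simp [dist_comm])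
  rw [dist_self, mul_zero, add_zero] at hlim
  have hlt : w₀ q - w₀ p + (w₀ q - w₀ p) < κ * ε := by linarith [mul_pos hκ hε]
  refine ⟨Icc p q, hpq, (hlim.eventually (gt_mem_nhds hlt)).mono fun j hj y hy => ?_⟩
  have := hg₀.mul_dist_le (hg j) hκ.le hp hq ⟨hp.1.trans hy.1, hy.2.trans hq.2⟩ hy.1 hy.2
  exact lt_of_mul_lt_mul_left (this.trans_lt hj) hκ.le

end Controlled

theorem isFineSeq_uniform {s t : ℝ} (hst : s < t) :
    IsFineSeq s t (fun j => j + 1) (fun j k => s + k * ((t - s) / (j + 1))) := by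
  have hstep : ∀ j k : ℕ, s + ((k + 1 : ℕ) : ℝ) * ((t - s) / (j + 1))
      = s + k * ((t - s) / (j + 1)) + (t - s) / (j + 1) := fun j k => by push_cast; ring
  refine ⟨fun j => by simp, fun j => ?_, fun j k _ => ?_, fun ε hε => ?_⟩
  · push_cast
    field_simp
    ring
  · dsimp only
    rw [hstep]
    have : 0 < (t - s) / (j + 1) := div_pos (sub_pos.2 hst) (by positivity)
    linarith
  · have hlim : Tendsto (fun j : ℕ => (t - s) * (1 / ((j : ℝ) + 1))) atTop (𝓝 0) := by
      simpa using tendsto_one_div_add_atTop_nhds_zero_nat.const_mul (t - s)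
    obtain ⟨N, hN⟩ := eventually_atTop.1 (hlim.eventually (gt_mem_nhds hε))
    refine ⟨N, fun j hj k _ => ?_⟩
    dsimp only
    rw [hstep, add_sub_cancel_left, div_eq_mul_one_div]
    exact hN j hj

theorem exists_isFineSeq {s t : ℝ} (hst : s ≤ t) : ∃ n P, IsFineSeq s t n P := by
  rcases hst.eq_or_lt with rfl | hst
  · exact ⟨fun _ => 0, fun _ _ => s, fun _ => rfl, fun _ => rfl, by simp, fun _ _ => ⟨0, by simp⟩⟩
  · exact ⟨_, _, isFineSeq_uniform hst⟩

theorem IsFineSeq.le_add {s t : ℝ} {n : ℕ → ℕ} {P : ℕ → ℕ → ℝ} (hP : IsFineSeq s t n P)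
    {j k m : ℕ} (hkm : k + m ≤ n j) : P j k ≤ P j (k + m) := by
  induction m with
  | zero => rfl
  | succ m ih => exact (ih (by omega)).trans (hP.2.2.1 j (k + m) (by omega)).le

theorem IsFineSeq.mem_Icc {s t : ℝ} {n : ℕ → ℕ} {P : ℕ → ℕ → ℝ} (hP : IsFineSeq s t n P)
    {j k : ℕ} (hk : k ≤ n j) : P j k ∈ Icc s t := by
  constructor
  · simpa [hP.1 j] using hP.le_add (j := j) (k := 0) (m := k) (by omega)
  · simpa [hP.2.1 j, Nat.add_sub_cancel' hk] using
      hP.le_add (j := j) (k := k) (m := n j - k) (by omega)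

section Concat

variable {a s t : ℝ} {nA nB : ℕ → ℕ} {PA PB : ℕ → ℕ → ℝ}

noncomputable def concatP (nA : ℕ → ℕ) (PA PB : ℕ → ℕ → ℝ) : ℕ → ℕ → ℝ :=
  fun j k => if k < nA j then PA j k else PB j (k - nA j)

theorem concatP_of_le (hA : IsFineSeq a s nA PA) (hB : IsFineSeq s t nB PB) {j k : ℕ}
    (hk : k ≤ nA j) : concatP nA PA PB j k = PA j k := by
  rcases hk.lt_or_eq with hk | rfl
  · simp [concatP, hk]
  · simp [concatP, hA.2.1 j, hB.1 j]

theorem concatP_add {j k : ℕ} : concatP nA PA PB j (nA j + k) = PB j k := by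
  simp [concatP]

theorem concatP_step (hA : IsFineSeq a s nA PA) (hB : IsFineSeq s t nB PB) {j k : ℕ}
    (hk : k < nA j + nB j) :
    (k < nA j ∧ concatP nA PA PB j k = PA j k ∧ concatP nA PA PB j (k + 1) = PA j (k + 1)) ∨
      ∃ i < nB j, concatP nA PA PB j k = PB j i ∧ concatP nA PA PB j (k + 1) = PB j (i + 1) := by
  by_cases hkA : k < nA j
  · exact Or.inl ⟨hkA, concatP_of_le hA hB hkA.le, concatP_of_le hA hB hkA⟩
  · obtain ⟨i, rfl⟩ : ∃ i, k = nA j + i := ⟨k - nA j, by omega⟩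
    exact Or.inr ⟨i, by omega, concatP_add, by rw [add_assoc, concatP_add]⟩

theorem isFineSeq_concat (hA : IsFineSeq a s nA PA) (hB : IsFineSeq s t nB PB) :
    IsFineSeq a t (fun j => nA j + nB j) (concatP nA PA PB) := by
  refine ⟨fun j => (concatP_of_le hA hB (Nat.zero_le _)).trans (hA.1 j),
    fun j => concatP_add.trans (hB.2.1 j), fun j k hk => ?_, fun ε hε => ?_⟩
  · rcases concatP_step hA hB hk with ⟨hk, h₀, h₁⟩ | ⟨i, hi, h₀, h₁⟩ <;> rw [h₀, h₁]
    exacts [hA.2.2.1 j k hk, hB.2.2.1 j i hi]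
  · obtain ⟨NA, hNA⟩ := hA.2.2.2 ε hε
    obtain ⟨NB, hNB⟩ := hB.2.2.2 ε hε
    refine ⟨max NA NB, fun j hj k hk => ?_⟩
    rcases concatP_step hA hB hk with ⟨hk, h₀, h₁⟩ | ⟨i, hi, h₀, h₁⟩ <;> rw [h₀, h₁]
    exacts [hNA j (le_of_max_le_left hj) k hk, hNB j (le_of_max_le_right hj) i hi]

theorem partSum_concatP {X : Type*} [NormedAddCommGroup X] (R : ℝ → X → ℝ≥0∞) (g : ℝ → X)
    (hA : IsFineSeq a s nA PA) (hB : IsFineSeq s t nB PB) (j : ℕ) :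
    partSum R g (nA j + nB j) (concatP nA PA PB j)
      = partSum R g (nA j) (PA j) + partSum R g (nB j) (PB j) := by
  unfold partSum
  rw [Finset.sum_range_add]
  congr 1
  · refine Finset.sum_congr rfl fun k hk => ?_
    rw [Finset.mem_range] at hk
    rw [concatP_of_le hA hB hk.le, concatP_of_le hA hB hk]
  · refine Finset.sum_congr rfl fun k _ => ?_
    rw [add_assoc, concatP_add, concatP_add]

end Concat

section Variation

variable {X : Type*} [NormedAddCommGroup X] {R : ℝ → X → ℝ≥0∞} {g : ℝ → X} {κ : ℝ}

theorem ofReal_mul_norm_sub_le_partSum (hκ : 0 ≤ κ) {n : ℕ} {P : ℕ → ℝ}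
    (hR : ∀ k < n, ∀ v, ENNReal.ofReal (κ * ‖v‖) ≤ R (P k) v) :
    ENNReal.ofReal (κ * ‖g (P n) - g (P 0)‖) ≤ partSum R g n P := by
  induction n with
  | zero => simp
  | succ n ih =>
    rw [partSum, Finset.sum_range_succ, ← partSum]
    calc ENNReal.ofReal (κ * ‖g (P (n + 1)) - g (P 0)‖)
        ≤ ENNReal.ofReal (κ * ‖g (P n) - g (P 0)‖ + κ * ‖g (P (n + 1)) - g (P n)‖) := by
          rw [← mul_add]
          gcongr
          exact (norm_sub_le_norm_sub_add_norm_sub _ (g (P n)) _).trans_eq (add_comm _ _)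
      _ = ENNReal.ofReal (κ * ‖g (P n) - g (P 0)‖)
            + ENNReal.ofReal (κ * ‖g (P (n + 1)) - g (P n)‖) :=
          ENNReal.ofReal_add (by positivity) (by positivity)
      _ ≤ _ := add_le_add (ih fun k hk => hR k (by omega)) (hR n (by omega) _)

theorem RVarEq.add_le_of_isFineSeq {a s t : ℝ} {Vs Vt L : ℝ≥0∞} (hVs : RVarEq R g a s Vs)
    (hVt : RVarEq R g a t Vt) (has : a ≤ s) {n : ℕ → ℕ} {P : ℕ → ℕ → ℝ}
    (hP : IsFineSeq s t n P) (hL : ∀ j, L ≤ partSum R g (n j) (P j)) : Vs + L ≤ Vt := by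
  obtain ⟨nA, PA, hA⟩ := exists_isFineSeq has
  refine le_of_tendsto_of_tendsto' ((hVs nA PA hA).add tendsto_const_nhds)
    (hVt _ _ (isFineSeq_concat hA hP)) fun j => ?_
  rw [partSum_concatP R g hA hP j]
  exact add_le_add_right (hL j) _

theorem RVarEq.add_ofReal_mul_norm_sub_le {a s t : ℝ} {Vs Vt : ℝ≥0∞} (hκ : 0 ≤ κ)
    (hR : ∀ u ∈ Icc s t, ∀ v, ENNReal.ofReal (κ * ‖v‖) ≤ R u v)
    (hVs : RVarEq R g a s Vs) (hVt : RVarEq R g a t Vt) (has : a ≤ s) (hst : s ≤ t) :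
    Vs + ENNReal.ofReal (κ * ‖g t - g s‖) ≤ Vt := by
  obtain ⟨n, P, hP⟩ := exists_isFineSeq hst
  refine hVs.add_le_of_isFineSeq hVt has hP fun j => ?_
  have := ofReal_mul_norm_sub_le_partSum (g := g) (n := n j) (P := P j) hκ
    fun k hk => hR _ (hP.mem_Icc hk.le)
  rwa [hP.1 j, hP.2.1 j] at this

variable {a b : ℝ} {V : ℝ → ℝ≥0∞}

theorem ne_top_of_rVarEq (hκ : 0 ≤ κ) (hR : ∀ u ∈ Icc a b, ∀ v, ENNReal.ofReal (κ * ‖v‖) ≤ R u v)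
    (hV : ∀ u ∈ Icc a b, RVarEq R g a u (V u)) (hVb : V b ≠ ⊤) {x : ℝ} (hx : x ∈ Icc a b) :
    V x ≠ ⊤ :=
  ne_top_of_le_ne_top hVb <| le_self_add.trans <|
    (hV x hx).add_ofReal_mul_norm_sub_le hκ (fun u hu => hR u ⟨hx.1.trans hu.1, hu.2⟩)
      (hV b ⟨hx.1.trans hx.2, le_rfl⟩) hx.1 hx.2

theorem distControlledOn_toReal_of_rVarEq (hκ : 0 ≤ κ)
    (hR : ∀ u ∈ Icc a b, ∀ v, ENNReal.ofReal (κ * ‖v‖) ≤ R u v)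
    (hV : ∀ u ∈ Icc a b, RVarEq R g a u (V u)) (hVb : V b ≠ ⊤) :
    DistControlledOn κ g (fun t => (V t).toReal) (Icc a b) := by
  intro x hx y hy hxy
  have hle := (hV x hx).add_ofReal_mul_norm_sub_le hκ
    (fun u hu => hR u ⟨hx.1.trans hu.1, hu.2.trans hy.2⟩) (hV y hy) hx.1 hxy
  have := ENNReal.toReal_mono (ne_top_of_rVarEq hκ hR hV hVb hy) hle
  rw [ENNReal.toReal_add (ne_top_of_rVarEq hκ hR hV hVb hx) ENNReal.ofReal_ne_top,
    ENNReal.toReal_ofReal (by positivity), ← dist_eq_norm, dist_comm] at this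
  linarith

end Variation

theorem stmt10_general
    {X : Type*} [NormedAddCommGroup X]
    (a b : ℝ)
    (ψ : X → ℝ≥0∞) (c : ℝ) (hc : 0 < c)
    (hψcoer : ∀ v : X, ENNReal.ofReal (c * ‖v‖) ≤ ψ v)
    (R : ℝ → X → ℝ≥0∞) (αl : ℝ) (hαl : 0 < αl)
    (hRlow : ∀ t ∈ Icc a b, ∀ v : X, ENNReal.ofReal αl * ψ v ≤ R t v)
    (fj : ℕ → ℝ → X) (f : ℝ → X)
    (vj : ℕ → ℝ → ℝ≥0∞) (v : ℝ → ℝ≥0∞)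
    (hvj : ∀ j, ∀ t ∈ Icc a b, RVarEq R (fj j) a t (vj j t))
    (hv : ∀ t ∈ Icc a b, RVarEq R f a t (v t))
    (hBVj : ∀ j, vj j b ≠ ⊤) (hBV : v b ≠ ⊤)
    (hcont : ContinuousOn v (Icc a b))
    (hptws : ∀ t ∈ Icc a b, Tendsto (fun j => fj j t) atTop (nhds (f t)))
    (hvarconv : ∀ t ∈ Icc a b, Tendsto (fun j => vj j t) atTop (nhds (v t))) :
    TendstoUniformlyOn (fun j => fj j) f atTop (Icc a b) := by
  have hκ : 0 < αl * c := mul_pos hαl hc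
  have hR : ∀ t ∈ Icc a b, ∀ u : X, ENNReal.ofReal (αl * c * ‖u‖) ≤ R t u := fun t ht u =>
    calc ENNReal.ofReal (αl * c * ‖u‖) = ENNReal.ofReal αl * ENNReal.ofReal (c * ‖u‖) := by
          rw [mul_assoc, ENNReal.ofReal_mul hαl.le]
      _ ≤ ENNReal.ofReal αl * ψ u := by gcongr; exact hψcoer u
      _ ≤ R t u := hRlow t ht u
  have hv_ne_top : ∀ t ∈ Icc a b, v t ≠ ⊤ := fun t => ne_top_of_rVarEq hκ.le hR hv hBV
  exact tendstoUniformlyOn_Icc_of_distControlledOn hκ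
    (fun j => distControlledOn_toReal_of_rVarEq hκ.le hR (hvj j) (hBVj j))
    (distControlledOn_toReal_of_rVarEq hκ.le hR hv hBV)
    (ENNReal.continuousOn_toReal.comp hcont hv_ne_top) hptws
    fun t ht => (ENNReal.tendsto_toReal (hv_ne_top t ht)).comp (hvarconv t ht)

theorem stmt10
    {X : Type*} [NormedAddCommGroup X] [NormedSpace ℝ X] [CompleteSpace X]
    (hrefl : Function.Surjective (NormedSpace.inclusionInDoubleDual ℝ X))
    (a b : ℝ) (hab : a ≤ b)
    (ψ : X → ℝ≥0∞) (c : ℝ) (hc : 0 < c)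
    (hψ0 : ψ 0 = 0)
    (hψconv : ∀ u v : X, ∀ θ : ℝ, θ ∈ Icc (0:ℝ) 1 →
      ψ (θ • u + (1 - θ) • v) ≤ ENNReal.ofReal θ * ψ u + ENNReal.ofReal (1 - θ) * ψ v)
    (hψhom : ∀ l : ℝ, 0 < l → ∀ v : X, ψ (l • v) = ENNReal.ofReal l * ψ v)
    (hψlsc : LowerSemicontinuous ψ)
    (hψcoer : ∀ v : X, ENNReal.ofReal (c * ‖v‖) ≤ ψ v)
    (R : ℝ → X → ℝ≥0∞) (αl αu : ℝ) (hαl : 0 < αl) (hαlu : αl ≤ αu)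
    (hRconv : ∀ t ∈ Icc a b, ∀ u v : X, ∀ θ : ℝ, θ ∈ Icc (0:ℝ) 1 →
      R t (θ • u + (1 - θ) • v) ≤ ENNReal.ofReal θ * R t u + ENNReal.ofReal (1 - θ) * R t v)
    (hRhom : ∀ t ∈ Icc a b, ∀ l : ℝ, 0 < l → ∀ v : X, R t (l • v) = ENNReal.ofReal l * R t v)
    (hRlsc : ∀ t ∈ Icc a b, LowerSemicontinuous (R t))
    (hR0 : ∀ t ∈ Icc a b, R t 0 = 0)
    (hRlow : ∀ t ∈ Icc a b, ∀ v : X, ENNReal.ofReal αl * ψ v ≤ R t v)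
    (hRup : ∀ t ∈ Icc a b, ∀ v : X, R t v ≤ ENNReal.ofReal αu * ψ v)
    (σ : ℝ → ℝ) (hσcont : ContinuousOn σ (Icc 0 (b - a)))
    (hσmono : MonotoneOn σ (Icc 0 (b - a)))
    (hσ0 : σ 0 = 0) (hσnonneg : ∀ s : ℝ, 0 ≤ σ s)
    (hRtime : ∀ s t : ℝ, a ≤ s → s ≤ t → t ≤ b → ∀ v : X, ψ v ≠ ⊤ →
      R t v ≤ R s v + ψ v * ENNReal.ofReal (σ (t - s)) ∧
        R s v ≤ R t v + ψ v * ENNReal.ofReal (σ (t - s)))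
    (fj : ℕ → ℝ → X) (f : ℝ → X)
    (vj : ℕ → ℝ → ℝ≥0∞) (v : ℝ → ℝ≥0∞)
    (hvj : ∀ j, ∀ t ∈ Icc a b, RVarEq R (fj j) a t (vj j t))
    (hv : ∀ t ∈ Icc a b, RVarEq R f a t (v t))
    (hBVj : ∀ j, vj j b ≠ ⊤) (hBV : v b ≠ ⊤)
    (hcontj : ∀ j, ContinuousOn (vj j) (Icc a b))
    (hcont : ContinuousOn v (Icc a b))
    (hptws : ∀ t ∈ Icc a b, Tendsto (fun j => fj j t) atTop (nhds (f t)))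
    (hvarconv : ∀ t ∈ Icc a b, Tendsto (fun j => vj j t) atTop (nhds (v t))) :
    TendstoUniformlyOn (fun j => fj j) f atTop (Icc a b) :=
  stmt10_general a b ψ c hc hψcoer R αl hαl hRlow fj f vj v hvj hv hBVj hBV hcont hptws hvarconv
end

section
/- Let X be a finite-dimensional space, Z a subspace with π:X→Z linear surjective, E(t,x)=E_sh(t,π(x)) with E_sh(t,·) μ-uniformly convex on Z (with respect to |·|_Z) and differentiable, and R(t,·):X→[0,∞] convex, 1-homogeneous, l.s.c., with R(t,0)=0. Define the restricted dissipation R_sh(t,z) := inf{R(t,x) : x∈X, π(x)=z}. Fix t, and suppose x*∈X satisfies E(t,x*) ≤ E(t,x)+R(t,x−x*) for every x∈X. Then the improved stability estimate holds: E(t,x*) + (μ/2)|π(x*)−π(x)|²_Z ≤ E(t,x)+R_sh(t, π(x)−π(x*)) for every x∈X. -/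
/-!
Test stability of `xstar` against `xstar + θ • y`, where `π y = π x - π xstar` and `0 < θ ≤ 1`.
By homogeneity the dissipation is `θ * R y`, while `μ`-strong convexity of the energy along the
segment from `π xstar` to `π x` makes the energy drop at least `θ` times the left-hand side, up
to an error `θ² * μ / 2 * ‖π xstar - π x‖²`. Dividing by `θ` and letting `θ → 0⁺` gives the
bound for every such `y`, hence for their infimum.
-/

open Set ENNReal

open Filter Topology in
theorem ENNReal.ofReal_le_of_forall_mem_Ioc {a b : ℝ} {r : ℝ≥0∞}
    (h : ∀ θ ∈ Ioc (0 : ℝ) 1, ENNReal.ofReal (a - θ * b) ≤ r) : ENNReal.ofReal a ≤ r := by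
  have hlim : Tendsto (fun θ : ℝ => ENNReal.ofReal (a - θ * b)) (𝓝[>] 0)
      (𝓝 (ENNReal.ofReal (a - 0 * b))) :=
    ((ENNReal.continuous_ofReal.comp (by fun_prop)).tendsto 0).mono_left nhdsWithin_le_nhds
  rw [zero_mul, sub_zero] at hlim
  exact le_of_tendsto hlim (eventually_of_mem (Ioc_mem_nhdsGT zero_lt_one) h)

theorem strongConvexOn_univ_of_forall_mem_Icc {Z : Type*} [NormedAddCommGroup Z]
    [NormedSpace ℝ Z] {f : Z → ℝ} {μ : ℝ}
    (hf : ∀ θ ∈ Icc (0:ℝ) 1, ∀ z₁ z₂ : Z,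
      f (θ • z₁ + (1 - θ) • z₂) ≤ θ * f z₁ + (1 - θ) * f z₂ - μ / 2 * θ * (1 - θ) * ‖z₁ - z₂‖ ^ 2) :
    StrongConvexOn univ μ f := by
  refine ⟨convex_univ, fun z₁ _ z₂ _ a b ha hb hab => ?_⟩
  obtain rfl : b = 1 - a := by linarith
  have := hf a ⟨ha, by linarith⟩ z₁ z₂
  simp only [smul_eq_mul]
  linarith

theorem StrongConvexOn.ofReal_add_sq_sub_le_of_stable {X Z : Type*} [AddCommGroup X]
    [Module ℝ X] [NormedAddCommGroup Z] [NormedSpace ℝ Z] {E : Z → ℝ} {μ : ℝ}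
    (hE : StrongConvexOn univ μ E) {π : X →ₗ[ℝ] Z} {R : X → ℝ≥0∞}
    (hR : ∀ l : ℝ, 0 < l → ∀ v : X, R (l • v) = ENNReal.ofReal l * R v) {xstar : X}
    (hstab : ∀ x : X, ENNReal.ofReal (E (π xstar) - E (π x)) ≤ R (x - xstar))
    {x y : X} (hy : π y = π x - π xstar) :
    ENNReal.ofReal (E (π xstar) + μ / 2 * ‖π xstar - π x‖ ^ 2 - E (π x)) ≤ R y := by
  set c := E (π xstar) + μ / 2 * ‖π xstar - π x‖ ^ 2 - E (π x)
  set d := μ / 2 * ‖π xstar - π x‖ ^ 2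
  refine ENNReal.ofReal_le_of_forall_mem_Ioc (b := d) fun θ ⟨hθ0, hθ1⟩ => ?_
  have hsegment : π (xstar + θ • y) = θ • π x + (1 - θ) • π xstar := by
    rw [map_add, map_smul, hy]; module
  have hray : ENNReal.ofReal (E (π xstar) - E (θ • π x + (1 - θ) • π xstar))
      ≤ ENNReal.ofReal θ * R y := by
    simpa [hsegment, hR θ hθ0] using hstab (xstar + θ • y)
  have hconv : θ * (c - θ * d) ≤ E (π xstar) - E (θ • π x + (1 - θ) • π xstar) := by
    have := hE.2 (mem_univ (π x)) (mem_univ (π xstar)) hθ0.le (sub_nonneg.2 hθ1)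
      (add_sub_cancel θ 1)
    rw [smul_eq_mul, smul_eq_mul, norm_sub_rev] at this
    linear_combination this
  have hθ : ENNReal.ofReal θ * ENNReal.ofReal (c - θ * d) ≤ ENNReal.ofReal θ * R y := by
    rw [← ENNReal.ofReal_mul hθ0.le]
    exact (ENNReal.ofReal_le_ofReal hconv).trans hray
  exact (ENNReal.mul_le_mul_iff_right (by simpa using hθ0) ofReal_ne_top).1 hθ

theorem stmt13_general
    {X Z : Type*} [NormedAddCommGroup X] [NormedSpace ℝ X]
    [NormedAddCommGroup Z] [NormedSpace ℝ Z]
    (π : X →L[ℝ] Z)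
    (t : ℝ) (Esh : ℝ → Z → ℝ) (μ : ℝ)
    -- μ-uniform convexity of `Esh (t, ·)`
    (hEuc : ∀ θ ∈ Icc (0:ℝ) 1, ∀ z₁ z₂ : Z,
      Esh t (θ • z₁ + (1 - θ) • z₂)
        ≤ θ * Esh t z₁ + (1 - θ) * Esh t z₂ - μ / 2 * θ * (1 - θ) * ‖z₁ - z₂‖ ^ 2)
    (R : ℝ → X → ℝ≥0∞)
    (hRhom : ∀ l : ℝ, 0 < l → ∀ v : X, R t (l • v) = ENNReal.ofReal l * R t v)
    (xstar : X)
    -- global stability of `xstar` at time `t` (with energy `E t x = Esh t (π x)`)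
    (hstab : ∀ x : X, ENNReal.ofReal (Esh t (π xstar) - Esh t (π x)) ≤ R t (x - xstar)) :
    -- improved stability, with the restricted dissipation `R_sh(t,z) = inf {R t y : π y = z}`
    ∀ x : X,
      ENNReal.ofReal (Esh t (π xstar) + μ / 2 * ‖π xstar - π x‖ ^ 2 - Esh t (π x))
        ≤ ⨅ (y : X) (_ : π y = π x - π xstar), R t y := fun _ =>
  le_iInf₂ fun _ hy => (strongConvexOn_univ_of_forall_mem_Icc hEuc).ofReal_add_sq_sub_le_of_stable
    (π := π.toLinearMap) hRhom hstab hy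

theorem stmt13
    {X Z : Type*} [NormedAddCommGroup X] [NormedSpace ℝ X] [FiniteDimensional ℝ X]
    [NormedAddCommGroup Z] [NormedSpace ℝ Z] [FiniteDimensional ℝ Z]
    (π : X →L[ℝ] Z) (hsurj : Function.Surjective π)
    (t : ℝ) (Esh : ℝ → Z → ℝ) (μ : ℝ) (hμ : 0 < μ)
    (hEdiff : Differentiable ℝ (Esh t))
    -- μ-uniform convexity of `Esh (t, ·)`
    (hEuc : ∀ θ ∈ Icc (0:ℝ) 1, ∀ z₁ z₂ : Z,
      Esh t (θ • z₁ + (1 - θ) • z₂)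
        ≤ θ * Esh t z₁ + (1 - θ) * Esh t z₂ - μ / 2 * θ * (1 - θ) * ‖z₁ - z₂‖ ^ 2)
    (R : ℝ → X → ℝ≥0∞)
    (hRconv : ∀ u v : X, ∀ θ : ℝ, θ ∈ Icc (0:ℝ) 1 →
      R t (θ • u + (1 - θ) • v) ≤ ENNReal.ofReal θ * R t u + ENNReal.ofReal (1 - θ) * R t v)
    (hRhom : ∀ l : ℝ, 0 < l → ∀ v : X, R t (l • v) = ENNReal.ofReal l * R t v)
    (hRlsc : LowerSemicontinuous (R t))
    (hR0 : R t 0 = 0)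
    (xstar : X)
    -- global stability of `xstar` at time `t` (with energy `E t x = Esh t (π x)`)
    (hstab : ∀ x : X, ENNReal.ofReal (Esh t (π xstar) - Esh t (π x)) ≤ R t (x - xstar)) :
    -- improved stability, with the restricted dissipation `R_sh(t,z) = inf {R t y : π y = z}`
    ∀ x : X,
      ENNReal.ofReal (Esh t (π xstar) + μ / 2 * ‖π xstar - π x‖ ^ 2 - Esh t (π x))
        ≤ ⨅ (y : X) (_ : π y = π x - π xstar), R t y :=
  stmt13_general π t Esh μ hEuc R hRhom xstar hstab
end

section
/- Let X=ℝ, R(v)=|v|, E(t,x)=(1/2)(x−t−1)², and for ε>0 consider the dynamic problem ε²ẍ_ε(t) + ∂|ẋ_ε(t)| + (x_ε(t)−t−1) ∋ 0 with x_ε(0)=0, ẋ_ε(0)=2. Then x_ε(t) = t + ε sin(t/ε) is the unique solution; x_ε converges uniformly on [0,T] to x(t)=t as ε→0⁺, but x_ε does not converge to x in W^{1,1}(0,T), since ∫₀ᵀ |ẋ_ε(τ)−1| dτ = ∫₀ᵀ |cos(τ/ε)| dτ does not tend to 0. -/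
/-! Uniqueness is an energy argument: the difference `y` of two solutions satisfies
`ε² y'' + y = η - ξ` with `ξ, η` subgradients of `|·|` at the two velocities, so by monotonicity
of `∂|·|` the energy `ε² y'² + y²`, which is absolutely continuous because `y'` is a primitive of
an integrable function, is nonincreasing; it vanishes at `t = 0`. Uniform convergence is
`|ε sin (t/ε)| ≤ ε`, and `|cos| ≥ cos²` gives `∫₀ᵀ |cos (τ/ε)| dτ ≥ (T - ε)/2`. -/

open MeasureTheory Set Filter

/-- The convex subdifferential of the absolute value at `v`. -/
def subdiffAbs (v : ℝ) : Set ℝ := {ξ | ∀ w : ℝ, |v| + ξ * (w - v) ≤ |w|}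

/-- `x` (with derivatives `x'`, `x''`) is a solution of the dynamic problem
`ε²ẍ + ∂|ẋ| + (x - t - 1) ∋ 0` on `[0,T]` with `x(0) = 0`, `ẋ(0) = 2`. -/
def IsDynSol (ε T : ℝ) (x x' x'' : ℝ → ℝ) : Prop :=
  IntervalIntegrable x'' volume 0 T ∧
    (∀ t ∈ Set.Icc (0:ℝ) T, x' t = 2 + ∫ τ in (0:ℝ)..t, x'' τ) ∧
    (∀ t ∈ Set.Icc (0:ℝ) T, x t = ∫ τ in (0:ℝ)..t, x' τ) ∧
    x 0 = 0 ∧ x' 0 = 2 ∧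
    ∀ᵐ t ∂(volume.restrict (Set.Icc (0:ℝ) T)),
      ∃ ξ ∈ subdiffAbs (x' t), ε ^ 2 * x'' t + ξ + (x t - t - 1) = 0

open Real

lemma subdiffAbs_one_mem {v : ℝ} (hv : 0 ≤ v) : (1 : ℝ) ∈ subdiffAbs v := fun w => by
  rw [abs_of_nonneg hv]; linarith [le_abs_self w]

lemma subdiffAbs_monotone {u v ξ η : ℝ} (hξ : ξ ∈ subdiffAbs u) (hη : η ∈ subdiffAbs v) :
    0 ≤ (ξ - η) * (u - v) := by
  nlinarith [hξ v, hη u]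

lemma continuousOn_of_eq_add_integral {f g : ℝ → ℝ} {a b : ℝ}
    (hg : IntervalIntegrable g volume a b)
    (hf : ∀ t ∈ uIcc a b, f t = f a + ∫ s in a..t, g s) : ContinuousOn f (uIcc a b) :=
  (continuousOn_const.add
    (intervalIntegral.continuousOn_primitive_interval' hg left_mem_uIcc)).congr hf

lemma sq_sub_sq_eq_two_mul_integral_mul {f g : ℝ → ℝ} {a b : ℝ}
    (hg : IntervalIntegrable g volume a b)
    (hf : ∀ t ∈ uIcc a b, f t = f a + ∫ s in a..t, g s) :
    f b ^ 2 - f a ^ 2 = 2 * ∫ s in a..b, f s * g s := by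
  set F : ℝ → ℝ := fun t => f a + ∫ s in a..t, g s
  have hF : AbsolutelyContinuousOnInterval F a b :=
    (by simpa [AbsolutelyContinuousOnInterval] using tendsto_const_nhds :
      AbsolutelyContinuousOnInterval (fun _ : ℝ => f a) a b).fun_add
      (hg.absolutelyContinuousOnInterval_intervalIntegral left_mem_uIcc)
  have hFf : ∀ t ∈ uIcc a b, F t = f t := fun t ht => (hf t ht).symm
  have hderiv : ∀ᵐ t, t ∈ uIoc a b → deriv F t = g t := by
    filter_upwards [hg.ae_hasDerivAt_integral] with t ht hta
    exact ((ht (uIoc_subset_uIcc hta) a left_mem_uIcc).const_add (f a)).deriv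
  have key := hF.integral_deriv_mul_eq_sub hF
  rw [intervalIntegral.integral_congr_ae (g := fun s => 2 * (f s * g s))] at key
  · rw [intervalIntegral.integral_const_mul] at key
    rw [key, hFf a left_mem_uIcc, hFf b right_mem_uIcc]
    ring
  · filter_upwards [hderiv] with t ht hta
    rw [ht hta, hFf t (uIoc_subset_uIcc hta)]
    ring

lemma energy_identity {u u' u'' : ℝ → ℝ} {a b : ℝ} (κ : ℝ)
    (hu'' : IntervalIntegrable u'' volume a b)
    (hu' : ∀ t ∈ uIcc a b, u' t = u' a + ∫ s in a..t, u'' s)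
    (hu : ∀ t ∈ uIcc a b, u t = u a + ∫ s in a..t, u' s) :
    κ * u' b ^ 2 + u b ^ 2 - (κ * u' a ^ 2 + u a ^ 2)
      = 2 * ∫ s in a..b, u' s * (κ * u'' s + u s) := by
  have hu'c := continuousOn_of_eq_add_integral hu'' hu'
  have hu'i : IntervalIntegrable u' volume a b := hu'c.intervalIntegrable
  have hsplit : (fun s => u' s * (κ * u'' s + u s))
      = fun s => κ * (u' s * u'' s) + u s * u' s := by
    funext s; ring
  rw [hsplit, intervalIntegral.integral_add ((hu''.continuousOn_mul hu'c).const_mul κ)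
      (hu'i.continuousOn_mul (continuousOn_of_eq_add_integral hu'i hu)),
    intervalIntegral.integral_const_mul]
  linear_combination κ * sq_sub_sq_eq_two_mul_integral_mul hu'' hu' +
    sq_sub_sq_eq_two_mul_integral_mul hu'i hu

namespace IsDynSol

variable {ε T : ℝ} {x x' x'' : ℝ → ℝ}

lemma restrict (h : IsDynSol ε T x x' x'') {t : ℝ} (ht : t ∈ Icc 0 T) :
    IsDynSol ε t x x' x'' := by
  obtain ⟨h'', h', h0, hx0, hx'0, hinc⟩ := h
  have hsub : Icc 0 t ⊆ Icc 0 T := Icc_subset_Icc_right ht.2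
  refine ⟨h''.mono_set ?_, fun s hs => h' s (hsub hs), fun s hs => h0 s (hsub hs), hx0, hx'0,
    ae_restrict_of_ae_restrict_of_subset hsub hinc⟩
  rw [uIcc_of_le ht.1, uIcc_of_le (ht.1.trans ht.2)]
  exact hsub

theorem eq_of_isDynSol (hT : 0 ≤ T) {w w' w'' : ℝ → ℝ}
    (hx : IsDynSol ε T x x' x'') (hw : IsDynSol ε T w w' w'') : x T = w T := by
  obtain ⟨hx'', hx', hx, hx0, hx'0, hxξ⟩ := hx
  obtain ⟨hw'', hw', hw, hw0, hw'0, hwη⟩ := hw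
  rw [← uIcc_of_le hT] at hx' hx hw' hw
  have hsub : ∀ t ∈ uIcc 0 T, uIcc 0 t ⊆ uIcc 0 T := fun t => uIcc_subset_uIcc left_mem_uIcc
  have hx'i : IntervalIntegrable x' volume 0 T := (continuousOn_of_eq_add_integral hx''
    fun t ht => by rw [hx' t ht, hx'0]).intervalIntegrable
  have hw'i : IntervalIntegrable w' volume 0 T := (continuousOn_of_eq_add_integral hw''
    fun t ht => by rw [hw' t ht, hw'0]).intervalIntegrable
  set y := fun t => x t - w t
  set y' := fun t => x' t - w' t
  set y'' := fun t => x'' t - w'' t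
  have hy' : ∀ t ∈ uIcc 0 T, y' t = y' 0 + ∫ s in 0..t, y'' s := fun t ht => by
    simp only [y', y'', hx' t ht, hw' t ht, hx'0, hw'0,
      intervalIntegral.integral_sub (hx''.mono_set (hsub t ht)) (hw''.mono_set (hsub t ht))]
    ring
  have hy : ∀ t ∈ uIcc 0 T, y t = y 0 + ∫ s in 0..t, y' s := fun t ht => by
    simp only [y, y', hx t ht, hw t ht, hx0, hw0,
      intervalIntegral.integral_sub (hx'i.mono_set (hsub t ht)) (hw'i.mono_set (hsub t ht))]
    ring
  have hdiss : ∫ s in 0..T, y' s * (ε ^ 2 * y'' s + y s) ≤ 0 := by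
    rw [← neg_nonneg, ← intervalIntegral.integral_neg]
    refine intervalIntegral.integral_nonneg_of_ae_restrict hT ?_
    filter_upwards [hxξ, hwη] with s ⟨ξ, hξ, hxs⟩ ⟨η, hη, hws⟩
    have : ε ^ 2 * y'' s + y s = η - ξ := by simp only [y, y'']; linarith
    rw [Pi.zero_apply, this]
    nlinarith [subdiffAbs_monotone hξ hη]
  have henergy := energy_identity (ε ^ 2) (hx''.sub hw'') hy' hy
  have hy0 : y' 0 = 0 ∧ y 0 = 0 := by simp [y, y', hx'0, hw'0, hx0, hw0]
  rw [hy0.1, hy0.2] at henergy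
  have : y T = 0 := by nlinarith [sq_nonneg (ε * y' T)]
  simpa [y, sub_eq_zero] using this

end IsDynSol

lemma hasDerivAt_add_mul_sin_div {ε : ℝ} (hε : ε ≠ 0) (t : ℝ) :
    HasDerivAt (fun t => t + ε * sin (t / ε)) (1 + cos (t / ε)) t := by
  refine ((hasDerivAt_id' t).add
    (((hasDerivAt_id' t).div_const ε).sin.const_mul ε)).congr_deriv ?_
  field_simp

lemma hasDerivAt_one_add_cos_div (ε t : ℝ) :
    HasDerivAt (fun t => 1 + cos (t / ε)) (-(1 / ε) * sin (t / ε)) t := by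
  refine (((hasDerivAt_id' t).div_const ε).cos.const_add 1).congr_deriv ?_
  ring

theorem isDynSol_add_mul_sin_div {ε : ℝ} (hε : ε ≠ 0) (T : ℝ) :
    IsDynSol ε T (fun t => t + ε * sin (t / ε)) (fun t => 1 + cos (t / ε))
      (fun t => -(1 / ε) * sin (t / ε)) := by
  refine ⟨(by fun_prop : Continuous fun t => -(1 / ε) * sin (t / ε)).intervalIntegrable 0 T,
    fun t _ => ?_, fun t _ => ?_, by simp, by norm_num, ae_of_all _ fun t => ⟨1, ?_, ?_⟩⟩
  · rw [intervalIntegral.integral_eq_sub_of_hasDerivAt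
      (fun s _ => hasDerivAt_one_add_cos_div ε s)
      (Continuous.intervalIntegrable (by fun_prop) _ _)]
    simp only [zero_div, cos_zero]
    ring
  · rw [intervalIntegral.integral_eq_sub_of_hasDerivAt
      (fun s _ => hasDerivAt_add_mul_sin_div hε s)
      (Continuous.intervalIntegrable (by fun_prop) _ _)]
    simp
  · exact subdiffAbs_one_mem (by linarith [neg_one_le_cos (t / ε)])
  · field_simp
    ring

theorem tendstoUniformlyOn_add_mul_sin_div (s : Set ℝ) :
    TendstoUniformlyOn (fun (ε : ℝ) (t : ℝ) => t + ε * sin (t / ε)) (fun t => t)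
      (nhdsWithin 0 (Ioi 0)) s := by
  rw [Metric.tendstoUniformlyOn_iff]
  intro δ hδ
  filter_upwards [Ioo_mem_nhdsGT hδ] with ε hε t _
  rw [Real.dist_eq, sub_add_cancel_left, abs_neg, abs_mul, abs_of_pos hε.1]
  nlinarith [abs_sin_le_one (t / ε), hε.1, hε.2]

lemma sub_div_two_le_integral_abs_cos_div {ε T : ℝ} (hε : 0 < ε) (hT : 0 ≤ T) :
    (T - ε) / 2 ≤ ∫ τ in (0:ℝ)..T, |cos (τ / ε)| := by
  have hsq : ∫ τ in (0:ℝ)..T, cos (τ / ε) ^ 2 = (ε * (cos (T / ε) * sin (T / ε)) + T) / 2 := by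
    rw [intervalIntegral.integral_comp_div (fun τ => cos τ ^ 2) hε.ne', integral_cos_sq]
    simp only [zero_div, cos_zero, sin_zero, smul_eq_mul]
    field_simp
    ring
  have hle : ∫ τ in (0:ℝ)..T, cos (τ / ε) ^ 2 ≤ ∫ τ in (0:ℝ)..T, |cos (τ / ε)| := by
    refine intervalIntegral.integral_mono_on hT (Continuous.intervalIntegrable (by fun_prop) _ _)
      (Continuous.intervalIntegrable (by fun_prop) _ _) fun τ _ => ?_
    rw [← sq_abs]
    nlinarith [abs_cos_le_one (τ / ε), abs_nonneg (cos (τ / ε))]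
  have hprod : -1 ≤ cos (T / ε) * sin (T / ε) := by
    nlinarith [sq_nonneg (cos (T / ε) + sin (T / ε)), cos_sq_add_sin_sq (T / ε)]
  nlinarith

theorem not_tendsto_integral_abs_cos_div {T : ℝ} (hT : 0 < T) :
    ¬ Tendsto (fun ε : ℝ => ∫ τ in (0:ℝ)..T, |cos (τ / ε)|) (nhdsWithin 0 (Ioi 0)) (nhds 0) := by
  intro h
  have hlim : Tendsto (fun ε : ℝ => (T - ε) / 2) (nhdsWithin 0 (Ioi 0)) (nhds (T / 2)) := by
    refine Tendsto.mono_left ?_ nhdsWithin_le_nhds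
    exact (by fun_prop : Continuous fun ε : ℝ => (T - ε) / 2).tendsto' 0 _ (by simp)
  have := le_of_tendsto_of_tendsto hlim h
    (eventually_nhdsWithin_of_forall fun ε hε => sub_div_two_le_integral_abs_cos_div hε hT.le)
  linarith

theorem stmt16 (T : ℝ) (hT : 0 < T) :
    -- `x_ε(t) = t + ε sin(t/ε)` solves the dynamic problem …
    (∀ ε > (0:ℝ),
      IsDynSol ε T (fun t => t + ε * Real.sin (t / ε))
        (fun t => 1 + Real.cos (t / ε))
        (fun t => -(1 / ε) * Real.sin (t / ε))) ∧
    -- … and it is the unique solution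
    (∀ ε > (0:ℝ), ∀ x x' x'' : ℝ → ℝ, IsDynSol ε T x x' x'' →
      ∀ t ∈ Set.Icc (0:ℝ) T, x t = t + ε * Real.sin (t / ε)) ∧
    -- uniform convergence to the quasistatic solution `x(t) = t` as `ε → 0⁺`
    TendstoUniformlyOn (fun (ε : ℝ) (t : ℝ) => t + ε * Real.sin (t / ε))
      (fun t => t) (nhdsWithin 0 (Set.Ioi 0)) (Set.Icc 0 T) ∧
    -- failure of `W^{1,1}` convergence
    (∀ ε > (0:ℝ),
      (∫ τ in (0:ℝ)..T, |(1 + Real.cos (τ / ε)) - 1|)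
        = ∫ τ in (0:ℝ)..T, |Real.cos (τ / ε)|) ∧
    ¬ Tendsto (fun ε : ℝ => ∫ τ in (0:ℝ)..T, |Real.cos (τ / ε)|)
        (nhdsWithin 0 (Set.Ioi 0)) (nhds 0) := by
  refine ⟨fun ε hε => isDynSol_add_mul_sin_div hε.ne' T, fun ε hε x x' x'' hx t ht => ?_,
    tendstoUniformlyOn_add_mul_sin_div _, fun ε _ => by simp only [add_sub_cancel_left],
    not_tendsto_integral_abs_cos_div hT⟩
  exact (hx.restrict ht).eq_of_isDynSol ht.1 ((isDynSol_add_mul_sin_div hε.ne' T).restrict ht)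
end
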